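/- arXiv:0901.4056 — 7 statements merged into one kernel-verified Lean document; each statement's English description precedes it below -/
import Mathlib

section
/- Let (X_i)_{i≥1} be a sequence of random variables adapted to a filtration (F_i) with 0 ≤ X_i ≤ M almost surely for all i and some constant M > 0, and let Y_i = E[X_i | F_{i-1}]. Then for any h > 0, the probability that there exists some t with |Σ_{i≤t} X_i / Σ_{i≤t} Y_i − 1| ≥ 1/2 and Σ_{i≤t} Y_i ≥ h is at most exp(−h/(20M) + 2). -/
/-!
Fix `c = ±1/(4M)`. Since `exp (c x) ≤ 1 + (c + c²M) x` on `[0, M]`, the conditional expectation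
of `exp (c X_t)` given `ℱ_t` is at most `exp ((c + c²M) Y_t)`, so
`exp (c ∑ X_i - (c + c²M) ∑ Y_i)` is a nonnegative supermartingale started at `1`, and Ville's
maximal inequality bounds the probability that it ever exceeds `exp (h/(16M))` by
`exp (-h/(16M))`. If `∑ Y_i ≥ h` and the ratio `∑ X_i / ∑ Y_i` is at least `3/2` (resp. at most
`1/2`), the exponent for `c = 1/(4M)` (resp. `c = -1/(4M)`) is at least `h/(16M)`.
-/

open MeasureTheory Finset Real

lemma exp_mul_le_one_add_mul_of_mem_Icc {c M x : ℝ} (hcM : |c| * M ≤ 1) (hx : x ∈ Set.Icc 0 M) :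
    exp (c * x) ≤ 1 + (c + c ^ 2 * M) * x := by
  have hcx : |c * x| ≤ 1 := by
    rw [abs_mul, abs_of_nonneg hx.1]
    exact (mul_le_mul_of_nonneg_left hx.2 (abs_nonneg c)).trans hcM
  have hexp := (abs_le.1 (abs_exp_sub_one_sub_id_le hcx)).2
  have hsq : c ^ 2 * x * x ≤ c ^ 2 * x * M :=
    mul_le_mul_of_nonneg_left hx.2 (mul_nonneg (sq_nonneg c) hx.1)
  nlinarith

lemma abs_sum_range_le {f : ℕ → ℝ} {M : ℝ} (hf : ∀ i, |f i| ≤ M) (t : ℕ) :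
    |∑ i ∈ range t, f i| ≤ t * M := by
  simpa using (abs_sum_le_sum_abs f (range t)).trans (sum_le_card_nsmul _ _ M fun i _ => hf i)

lemma le_exponent_of_half_le_abs_div_sub_one {M S T h : ℝ} (hM : 0 < M) (hh : 0 < h)
    (hT : h ≤ T) (hdev : 1 / 2 ≤ |S / T - 1|) :
    h / (16 * M) ≤ 1 / (4 * M) * S - (1 / (4 * M) + (1 / (4 * M)) ^ 2 * M) * T ∨
      h / (16 * M) ≤ -(1 / (4 * M)) * S - (-(1 / (4 * M)) + (-(1 / (4 * M))) ^ 2 * M) * T := by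
  have hTpos : 0 < T := hh.trans_le hT
  rcases le_abs.1 hdev with hdev | hdev
  · left
    have hS : 3 / 2 * T ≤ S := by rw [← le_div_iff₀ hTpos]; linarith
    have : 1 / (4 * M) * S - (1 / (4 * M) + (1 / (4 * M)) ^ 2 * M) * T =
        (4 * S - 5 * T) / (16 * M) := by
      field_simp; ring
    rw [this]
    gcongr
    linarith
  · right
    have hS : S ≤ 1 / 2 * T := by rw [← div_le_iff₀ hTpos]; linarith
    have : -(1 / (4 * M)) * S - (-(1 / (4 * M)) + (-(1 / (4 * M))) ^ 2 * M) * T =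
        (3 * T - 4 * S) / (16 * M) := by
      field_simp; ring
    rw [this]
    gcongr
    linarith

namespace MeasureTheory.Supermartingale

variable {Ω : Type*} {m0 : MeasurableSpace Ω} {μ : Measure Ω} [IsFiniteMeasure μ]
  {ℱ : Filtration ℕ m0} {Z : ℕ → Ω → ℝ}

theorem maximal_ineq_le (hZ : Supermartingale Z ℱ μ) (hnonneg : ∀ t ω, 0 ≤ Z t ω) (ε : ℝ)
    (n : ℕ) : ε * μ.real {ω | ∃ k ≤ n, ε ≤ Z k ω} ≤ ∫ ω, Z 0 ω ∂μ := by
  set A := {ω | ∃ k ≤ n, ε ≤ Z k ω}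
  set τ : Ω → ℕ∞ := fun ω => (hittingBtwn Z (Set.Ici ε) 0 n ω : ℕ)
  have hτ : IsStoppingTime ℱ τ :=
    hZ.stronglyAdapted.adapted.isStoppingTime_hittingBtwn measurableSet_Ici
  have hτn (ω : Ω) : τ ω ≤ n := WithTop.coe_le_coe.2 (hittingBtwn_le ω)
  have hint : Integrable (stoppedValue Z τ) μ := integrable_stoppedValue ℕ hτ hZ.integrable hτn
  have hA : MeasurableSet A := by
    simp only [A, Set.ofPred_exists, Set.ofPred_and]
    exact .iUnion fun k => (MeasurableSet.const _).inter <| measurableSet_le measurable_const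
      ((hZ.stronglyAdapted k).mono (ℱ.le k)).measurable
  have hge (ω : Ω) (hω : ω ∈ A) : ε ≤ stoppedValue Z τ ω := by
    obtain ⟨k, hk, hεk⟩ := hω
    exact stoppedValue_hittingBtwn_mem ⟨k, ⟨k.zero_le, hk⟩, hεk⟩
  calc ε * μ.real A = μ.real A • ε := by rw [smul_eq_mul, mul_comm]
    _ ≤ ∫ ω in A, stoppedValue Z τ ω ∂μ :=
      setIntegral_ge_of_const_le hA (measure_ne_top μ A) hge hint.integrableOn
    _ ≤ ∫ ω, stoppedValue Z τ ω ∂μ :=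
      setIntegral_le_integral hint (.of_forall fun ω => hnonneg _ ω)
    _ ≤ ∫ ω, Z 0 ω ∂μ := by
      have := hZ.neg.expected_stoppedValue_mono (isStoppingTime_const ℱ 0) hτ
        (fun ω => bot_le) hτn
      simpa [stoppedValue, integral_neg] using this

theorem maximal_ineq (hZ : Supermartingale Z ℱ μ) (hnonneg : ∀ t ω, 0 ≤ Z t ω) (ε : ℝ) :
    ε * μ.real {ω | ∃ t, ε ≤ Z t ω} ≤ ∫ ω, Z 0 ω ∂μ := by
  have hunion : {ω | ∃ t, ε ≤ Z t ω} = ⋃ n, {ω | ∃ k ≤ n, ε ≤ Z k ω} := by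
    ext ω
    simp only [Set.mem_ofPred_eq, Set.mem_iUnion]
    exact ⟨fun ⟨t, ht⟩ => ⟨t, t, le_rfl, ht⟩, fun ⟨_, k, _, hk⟩ => ⟨k, hk⟩⟩
  have hmono : Monotone fun n => {ω | ∃ k ≤ n, ε ≤ Z k ω} :=
    fun _ _ hmn _ ⟨k, hk, hεk⟩ => ⟨k, hk.trans hmn, hεk⟩
  have hlim := (ENNReal.tendsto_toReal (measure_ne_top μ _)).comp
    (tendsto_measure_iUnion_atTop hmono)
  rw [hunion]
  exact le_of_tendsto' (hlim.const_mul ε) (hZ.maximal_ineq_le hnonneg ε)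

end MeasureTheory.Supermartingale

section Predictions

variable {Ω : Type*} {m0 : MeasurableSpace Ω} {μ : Measure Ω}

lemma integrable_exp_mul_of_ae_mem_Icc [IsFiniteMeasure μ] {f : Ω → ℝ} {M : ℝ}
    (hf : AEStronglyMeasurable f μ) (hbdd : ∀ᵐ ω ∂μ, f ω ∈ Set.Icc 0 M) (c : ℝ) :
    Integrable (fun ω => exp (c * f ω)) μ := by
  refine Integrable.of_bound (continuous_exp.comp_aestronglyMeasurable (hf.const_mul c))
    (exp (|c| * M)) ?_
  filter_upwards [hbdd] with ω hω
  rw [Real.norm_eq_abs, abs_of_pos (exp_pos _), exp_le_exp]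
  calc c * f ω ≤ |c| * f ω := mul_le_mul_of_nonneg_right (le_abs_self c) hω.1
    _ ≤ |c| * M := mul_le_mul_of_nonneg_left hω.2 (abs_nonneg c)

lemma condExp_exp_mul_le_exp_mul_condExp [IsFiniteMeasure μ] {m : MeasurableSpace Ω} {f : Ω → ℝ}
    {M c d : ℝ} (hm : m ≤ m0) (hf : AEStronglyMeasurable[m0] f μ)
    (hbdd : ∀ᵐ ω ∂μ, f ω ∈ Set.Icc 0 M)
    (hcd : ∀ x ∈ Set.Icc 0 M, exp (c * x) ≤ 1 + d * x) :
    μ[fun ω => exp (c * f ω) | m] ≤ᵐ[μ] fun ω => exp (d * μ[f | m] ω) := by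
  have hfi : Integrable f μ := Integrable.of_bound hf M <| by
    filter_upwards [hbdd] with ω hω
    rw [Real.norm_eq_abs, abs_of_nonneg hω.1]
    exact hω.2
  have hexpi := integrable_exp_mul_of_ae_mem_Icc hf hbdd c
  have hlin : μ[fun ω => exp (c * f ω) | m] ≤ᵐ[μ] μ[(fun _ => 1) + d • f | m] :=
    condExp_mono hexpi ((integrable_const 1).add (hfi.smul d)) <| by
      filter_upwards [hbdd] with ω hω using hcd _ hω
  have hcondExp_lin : μ[(fun _ => 1) + d • f | m] =ᵐ[μ] (fun _ => 1) + d • μ[f | m] := by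
    refine (condExp_add (integrable_const 1) (hfi.smul d) m).trans ?_
    rw [condExp_const hm]
    filter_upwards [condExp_smul (μ := μ) d f m] with ω hω
    simp only [Pi.add_apply, hω]
  filter_upwards [hlin, hcondExp_lin] with ω h₁ h₂
  rw [h₂, Pi.add_apply, Pi.smul_apply, smul_eq_mul] at h₁
  linarith [add_one_le_exp (d * μ[f | m] ω)]

variable {ℱ : Filtration ℕ m0} {X : ℕ → Ω → ℝ} {M c d : ℝ}

variable (μ ℱ X c d) in
noncomputable def expPredictionProcess (t : ℕ) (ω : Ω) : ℝ :=
  exp (c * ∑ i ∈ range t, X i ω - d * ∑ i ∈ range t, μ[X i | ℱ i] ω)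

theorem supermartingale_expPredictionProcess [IsFiniteMeasure μ]
    (hadp : ∀ i, StronglyMeasurable[ℱ (i + 1)] (X i))
    (hbdd : ∀ i, ∀ᵐ ω ∂μ, X i ω ∈ Set.Icc 0 M)
    (hcd : ∀ x ∈ Set.Icc 0 M, exp (c * x) ≤ 1 + d * x) :
    Supermartingale (expPredictionProcess μ ℱ X c d) ℱ μ := by
  set Z := expPredictionProcess μ ℱ X c d
  have hXm (i : ℕ) : StronglyMeasurable[m0] (X i) := (hadp i).mono (ℱ.le _)
  have hadapted : StronglyAdapted ℱ Z := fun t => by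
    refine continuous_exp.comp_stronglyMeasurable (StronglyMeasurable.sub ?_ ?_)
    · exact (Finset.stronglyMeasurable_fun_sum _ fun i hi =>
        (hadp i).mono (ℱ.mono (mem_range.1 hi))).const_mul c
    · exact (Finset.stronglyMeasurable_fun_sum _ fun i hi =>
        stronglyMeasurable_condExp.mono (ℱ.mono (mem_range.1 hi).le)).const_mul d
  have hXabs (i : ℕ) : ∀ᵐ ω ∂μ, |X i ω| ≤ M := by
    filter_upwards [hbdd i] with ω hω
    rw [abs_of_nonneg hω.1]
    exact hω.2
  have hbound : ∀ᵐ ω ∂μ, ∀ i, |X i ω| ≤ M ∧ |μ[X i | ℱ i] ω| ≤ M :=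
    ae_all_iff.2 fun i => (hXabs i).and (ae_bdd_abs_condExp_of_ae_bdd_abs (hXabs i))
  have hint (t : ℕ) : Integrable (Z t) μ := by
    refine Integrable.of_bound ((hadapted t).mono (ℱ.le t)).aestronglyMeasurable
      (exp ((|c| + |d|) * (t * M))) ?_
    filter_upwards [hbound] with ω hω
    simp only [Z, expPredictionProcess, Real.norm_eq_abs]
    rw [abs_of_pos (exp_pos _), exp_le_exp]
    have hS := abs_sum_range_le (fun i => (hω i).1) t
    have hT := abs_sum_range_le (fun i => (hω i).2) t
    calc _ ≤ |c| * |∑ i ∈ range t, X i ω| + |d| * |∑ i ∈ range t, μ[X i | ℱ i] ω| := by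
          rw [← abs_mul, ← abs_mul]
          exact (le_abs_self _).trans (abs_sub _ _)
      _ ≤ (|c| + |d|) * (t * M) := by nlinarith [abs_nonneg c, abs_nonneg d]
  refine supermartingale_nat hadapted hint fun t => ?_
  have hstep : Z (t + 1) =
      (fun ω => Z t ω * exp (-(d * μ[X t | ℱ t] ω))) * fun ω => exp (c * X t ω) := by
    ext ω
    simp only [Z, expPredictionProcess, Pi.mul_apply, sum_range_succ, ← exp_add]
    ring_nf
  have hfactor : StronglyMeasurable[ℱ t] fun ω => Z t ω * exp (-(d * μ[X t | ℱ t] ω)) :=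
    (hadapted t).mul (continuous_exp.comp_stronglyMeasurable
      (stronglyMeasurable_condExp.const_mul d).neg)
  filter_upwards [hstep ▸ condExp_mul_of_stronglyMeasurable_left hfactor (hstep ▸ hint (t + 1))
      (integrable_exp_mul_of_ae_mem_Icc (hXm t).aestronglyMeasurable (hbdd t) c),
    condExp_exp_mul_le_exp_mul_condExp (ℱ.le t) (hXm t).aestronglyMeasurable (hbdd t) hcd]
    with ω hpull hle
  rw [hpull, Pi.mul_apply]
  calc _ ≤ Z t ω * exp (-(d * μ[X t | ℱ t] ω)) * exp (d * μ[X t | ℱ t] ω) :=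
        mul_le_mul_of_nonneg_left hle (mul_nonneg (exp_pos _).le (exp_pos _).le)
    _ = Z t ω := by rw [mul_assoc, ← exp_add, neg_add_cancel, exp_zero, mul_one]

theorem measureReal_exists_exp_le_expPredictionProcess_le [IsProbabilityMeasure μ]
    (hadp : ∀ i, StronglyMeasurable[ℱ (i + 1)] (X i)) (hbdd : ∀ i, ∀ᵐ ω ∂μ, X i ω ∈ Set.Icc 0 M)
    (hcd : ∀ x ∈ Set.Icc 0 M, exp (c * x) ≤ 1 + d * x) (a : ℝ) :
    μ.real {ω | ∃ t, exp a ≤ expPredictionProcess μ ℱ X c d t ω} ≤ exp (-a) := by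
  have h := (supermartingale_expPredictionProcess hadp hbdd hcd).maximal_ineq
    (fun t ω => (exp_pos _).le) (exp a)
  simp only [expPredictionProcess, range_zero, sum_empty, mul_zero, sub_zero, exp_zero,
    integral_const, probReal_univ, smul_eq_mul, mul_one] at h
  rw [exp_neg, ← one_div, le_div_iff₀' (exp_pos a)]
  exact h

end Predictions

lemma setOf_ae_eq_of_forall_ae_eq {Ω ι β : Type*} [Countable ι] {m0 : MeasurableSpace Ω}
    {μ : Measure Ω} {Y Y' : ι → Ω → β} (hY : ∀ i, Y i =ᵐ[μ] Y' i) (P : Ω → (ι → β) → Prop) :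
    {ω | P ω fun i => Y i ω} =ᵐ[μ] {ω | P ω fun i => Y' i ω} := by
  refine Filter.eventuallyEq_set.2 ?_
  filter_upwards [ae_all_iff.2 hY] with ω hω
  simp only [hω]

/-- The large deviation inequality relating a sum of uniformly bounded nonnegative
random variables `X i` (here `X i` is the `(i+1)`-st variable, measurable with respect
to `ℱ (i+1)`) to the sum of its one-step predictions `Y i = E[X i | ℱ i]`: the probability
that for some `t` the ratio of the two partial sums deviates from `1` by at least `1/2`
while the sum of predictions is at least `h` is at most `exp (-h/(20M) + 2)`. -/
theorem prop_predictions
    {Ω : Type*} {m0 : MeasurableSpace Ω} {μ : Measure Ω} [IsProbabilityMeasure μ]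
    (ℱ : Filtration ℕ m0) (X Y : ℕ → Ω → ℝ) (M : ℝ) (hM : 0 < M)
    (hadp : ∀ i : ℕ, StronglyMeasurable[ℱ (i + 1)] (X i))
    (hbdd : ∀ i : ℕ, ∀ᵐ ω ∂μ, 0 ≤ X i ω ∧ X i ω ≤ M)
    (hY : ∀ i : ℕ, Y i =ᵐ[μ] μ[X i | ℱ i])
    (h : ℝ) (hh : 0 < h) :
    (μ {ω | ∃ t : ℕ,
        1 / 2 ≤ |(∑ i ∈ Finset.range t, X i ω) / (∑ i ∈ Finset.range t, Y i ω) - 1| ∧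
        h ≤ ∑ i ∈ Finset.range t, Y i ω}).toReal
      ≤ Real.exp (-h / (20 * M) + 2) := by
  set A := fun c : ℝ =>
    {ω | ∃ t, exp (h / (16 * M)) ≤ expPredictionProcess μ ℱ X c (c + c ^ 2 * M) t ω}
  have hA (c : ℝ) (hc : |c| = 1 / (4 * M)) : μ.real (A c) ≤ exp (-(h / (16 * M))) :=
    measureReal_exists_exp_le_expPredictionProcess_le hadp hbdd
      (fun x hx => exp_mul_le_one_add_mul_of_mem_Icc (by rw [hc]; field_simp; norm_num) hx) _
  have hevent := setOf_ae_eq_of_forall_ae_eq hY fun ω y => ∃ t : ℕ,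
    1 / 2 ≤ |(∑ i ∈ range t, X i ω) / (∑ i ∈ range t, y i) - 1| ∧ h ≤ ∑ i ∈ range t, y i
  have hsub : {ω | ∃ t : ℕ,
      1 / 2 ≤ |(∑ i ∈ range t, X i ω) / (∑ i ∈ range t, μ[X i | ℱ i] ω) - 1| ∧
      h ≤ ∑ i ∈ range t, μ[X i | ℱ i] ω} ⊆ A (1 / (4 * M)) ∪ A (-(1 / (4 * M))) := by
    rintro ω ⟨t, hdev, hT⟩
    exact (le_exponent_of_half_le_abs_div_sub_one hM hh hT hdev).imp
      (fun he => ⟨t, exp_le_exp.2 he⟩) fun he => ⟨t, exp_le_exp.2 he⟩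
  calc (μ _).toReal = μ.real _ := congrArg ENNReal.toReal (measure_congr hevent)
    _ ≤ μ.real (A (1 / (4 * M))) + μ.real (A (-(1 / (4 * M)))) :=
      (measureReal_mono hsub).trans (measureReal_union_le _ _)
    _ ≤ 2 * exp (-(h / (16 * M))) := by
      have hc : |1 / (4 * M)| = 1 / (4 * M) := abs_of_pos (by positivity)
      linarith [hA _ hc, hA _ ((abs_neg _).trans hc)]
    _ ≤ exp 2 * exp (-h / (20 * M)) := by
      gcongr
      · linarith [add_one_le_exp 2]
      · rw [neg_div]
        gcongr
        norm_num
    _ = exp (-h / (20 * M) + 2) := by rw [← exp_add, add_comm]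
end

section
/- Let (X_i)_{i≥1} be a sequence of random variables adapted to a filtration (F_i) with 0 ≤ X_i ≤ M almost surely for all i and some constant M > 0, and let Y_i = E[X_i | F_{i-1}]. Then for any 0 < ε ≤ 1/2 and any h > 0, the probability that there exists some t with |Σ_{i≤t} X_i / Σ_{i≤t} Y_i − 1| ≥ ε and Σ_{i≤t} Y_i ≥ h is at most exp(−hε²/(5M) + 2). -/
/-!
Let `S t` and `T t` be the partial sums of the `X i` and of the predictions `Y i = E[X i | ℱ i]`.
If `exp (l x) ≤ 1 + c x` on `[0, M]` (the chord of the exponential), the factor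
`exp (l X i - c Y i)` has conditional mean at most `exp (-c Y i) (1 + c Y i) ≤ 1` given `ℱ i`, so
`exp (l S t - c T t)` is a nonnegative supermartingale started at `1`; by optional stopping at the
first time it reaches `exp a`, the probability that it ever does is at most `exp (-a)` (Ville's
inequality). Taking `l = ε / (2M)` for the upper deviations `S ≥ (1 + ε) T` and `l = -ε / M` for
the lower ones `S ≤ (1 - ε) T`, and using `T ≥ h` on the event, both exponents are at least
`h ε² / (5M)` by the bound `exp x ≤ 1 + x + 3x²/4` for `|x| ≤ 1`; the factor `2 ≤ exp 2` pays
for the union bound.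
-/

open MeasureTheory Finset

theorem mul_le_abs_mul_of_abs_le {a x M : ℝ} (hx : |x| ≤ M) : a * x ≤ |a| * M :=
  (le_abs_self _).trans <| (abs_mul a x).trans_le <| mul_le_mul_of_nonneg_left hx (abs_nonneg a)

theorem Real.exp_le_one_add_add_three_div_four_mul_sq {x : ℝ} (hx : |x| ≤ 1) :
    Real.exp x ≤ 1 + x + 3 / 4 * x ^ 2 := by
  have h := Real.exp_bound hx (n := 2) (by norm_num)
  simp only [sum_range_succ, sum_range_zero, Nat.factorial, sq_abs] at h
  norm_num at h
  linarith [(abs_sub_le_iff.1 h).1]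

theorem Real.exp_div_mul_le_one_add_mul {M θ x : ℝ} (hM : 0 < M) (hx : x ∈ Set.Icc 0 M) :
    Real.exp (θ / M * x) ≤ 1 + (Real.exp θ - 1) / M * x := by
  have hxM : x / M ≤ 1 := (div_le_one hM).2 hx.2
  have h := convexOn_exp.2 (Set.mem_univ 0) (Set.mem_univ θ) (sub_nonneg.2 hxM)
    (div_nonneg hx.1 hM.le) (sub_add_cancel 1 (x / M))
  simp only [smul_eq_mul, mul_zero, zero_add, Real.exp_zero, mul_one] at h
  calc Real.exp (θ / M * x) = Real.exp (x / M * θ) := by ring_nf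
    _ ≤ 1 - x / M + x / M * Real.exp θ := h
    _ = 1 + (Real.exp θ - 1) / M * x := by ring

theorem sq_div_five_le_one_add_mul_half_sub_exp_half {ε : ℝ} (hε : |ε| ≤ 2) :
    ε ^ 2 / 5 ≤ (1 + ε) * (ε / 2) - (Real.exp (ε / 2) - 1) := by
  have h := Real.exp_le_one_add_add_three_div_four_mul_sq (x := ε / 2) (by
    rw [abs_div, abs_two]; linarith)
  nlinarith [sq_nonneg ε]

theorem sq_div_five_le_one_sub_mul_neg_sub_exp_neg {ε : ℝ} (hε : |ε| ≤ 1) :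
    ε ^ 2 / 5 ≤ (1 - ε) * -ε - (Real.exp (-ε) - 1) := by
  have h := Real.exp_le_one_add_add_three_div_four_mul_sq (x := -ε) (by rwa [abs_neg])
  nlinarith [sq_nonneg ε]

theorem one_add_mul_le_or_le_one_sub_mul_of_le_abs_div_sub_one {S T ε : ℝ} (hT : 0 < T)
    (h : ε ≤ |S / T - 1|) : (1 + ε) * T ≤ S ∨ S ≤ (1 - ε) * T := by
  rcases le_abs.1 h with h | h
  · exact .inl <| (le_div_iff₀ hT).1 (by linarith)
  · exact .inr <| (div_le_iff₀ hT).1 (by linarith)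

namespace MeasureTheory

variable {Ω : Type*} {m0 : MeasurableSpace Ω} {μ : Measure Ω} [IsFiniteMeasure μ]
  {ℱ : Filtration ℕ m0} {Z : ℕ → Ω → ℝ}

theorem Supermartingale.mul_measureReal_exists_le_le (hZ : Supermartingale Z ℱ μ)
    (hnonneg : 0 ≤ Z) (c : ℝ) (n : ℕ) :
    c * μ.real {ω | ∃ j ≤ n, c ≤ Z j ω} ≤ ∫ ω, Z 0 ω ∂μ := by
  set τ : Ω → ℕ∞ := fun ω => (hittingBtwn Z (Set.Ici c) 0 n ω : ℕ)
  have hτ : IsStoppingTime ℱ τ :=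
    hZ.stronglyAdapted.adapted.isStoppingTime_hittingBtwn measurableSet_Ici
  have hτn : ∀ ω, τ ω ≤ n := fun ω => WithTop.coe_le_coe.2 (hittingBtwn_le ω)
  have hint : Integrable (stoppedValue Z τ) μ := integrable_stoppedValue ℕ hτ hZ.integrable hτn
  have hmeas : MeasurableSet {ω | ∃ j ≤ n, c ≤ Z j ω} := by
    simp only [Set.ofPred_exists, Set.ofPred_and]
    exact .iUnion fun j => (MeasurableSet.const _).inter <|
      measurableSet_le measurable_const ((hZ.stronglyMeasurable j).mono (ℱ.le j)).measurable
  have hle_stopped : ∀ ω ∈ {ω | ∃ j ≤ n, c ≤ Z j ω}, c ≤ stoppedValue Z τ ω :=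
    fun ω ⟨j, hjn, hj⟩ => stoppedValue_hittingBtwn_mem ⟨j, ⟨Nat.zero_le j, hjn⟩, hj⟩
  have hopt : ∫ ω, stoppedValue Z τ ω ∂μ ≤ ∫ ω, Z 0 ω ∂μ := by
    have := hZ.neg.expected_stoppedValue_mono (isStoppingTime_const ℱ 0) hτ
      (fun ω => bot_le) hτn
    simp only [stoppedValue, Pi.neg_apply, integral_neg, neg_le_neg_iff] at this
    exact this
  calc c * μ.real {ω | ∃ j ≤ n, c ≤ Z j ω}
      ≤ ∫ ω in {ω | ∃ j ≤ n, c ≤ Z j ω}, stoppedValue Z τ ω ∂μ :=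
        setIntegral_ge_of_const_le_real hmeas (measure_ne_top _ _) hle_stopped hint.integrableOn
    _ ≤ ∫ ω, stoppedValue Z τ ω ∂μ :=
        setIntegral_le_integral hint (.of_forall fun ω => hnonneg _ ω)
    _ ≤ ∫ ω, Z 0 ω ∂μ := hopt

theorem Supermartingale.measure_exists_le_le (hZ : Supermartingale Z ℱ μ) (hnonneg : 0 ≤ Z)
    {c : ℝ} (hc : 0 < c) :
    μ {ω | ∃ t, c ≤ Z t ω} ≤ ENNReal.ofReal ((∫ ω, Z 0 ω ∂μ) / c) := by
  rw [Set.ofPred_exists, measure_iUnion_eq_iSup_accumulate]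
  refine iSup_le fun n => ?_
  have hacc : Set.accumulate (fun t => {ω | c ≤ Z t ω}) n = {ω | ∃ j ≤ n, c ≤ Z j ω} := by
    ext ω; simp [Set.mem_accumulate]
  rw [hacc, ENNReal.le_ofReal_iff_toReal_le (measure_ne_top _ _)
    (div_nonneg (integral_nonneg (hnonneg 0)) hc.le), le_div_iff₀ hc, mul_comm, ← measureReal_def]
  exact hZ.mul_measureReal_exists_le_le hnonneg c n

end MeasureTheory

section ConditionalExpectation

variable {Ω : Type*} {m m0 : MeasurableSpace Ω} {μ : Measure Ω} [IsFiniteMeasure μ]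

theorem condExp_one_add_mul_ae_eq (hm : m ≤ m0) {X : Ω → ℝ} (hX : Integrable X μ) (c : ℝ) :
    μ[fun ω => 1 + c * X ω | m] =ᵐ[μ] fun ω => 1 + c * μ[X | m] ω := by
  have hsum : (fun ω => 1 + c * X ω) = (fun _ => (1 : ℝ)) + c • X := rfl
  rw [hsum]
  filter_upwards [condExp_add (integrable_const 1) (hX.smul c) m, condExp_smul c X m]
    with ω hadd hsmul
  rw [hadd, Pi.add_apply, hsmul, condExp_const hm]
  rfl

theorem condExp_exp_mul_sub_mul_condExp_le_one (hm : m ≤ m0) {X : Ω → ℝ} {l c M : ℝ}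
    (hX : AEStronglyMeasurable X μ) (hXM : ∀ᵐ ω ∂μ, X ω ∈ Set.Icc 0 M)
    (hc : ∀ x ∈ Set.Icc 0 M, Real.exp (l * x) ≤ 1 + c * x) :
    μ[fun ω => Real.exp (l * X ω - c * μ[X | m] ω) | m] ≤ᵐ[μ] 1 := by
  set Y := μ[X | m]
  have hX_abs : ∀ᵐ ω ∂μ, |X ω| ≤ M := by
    filter_upwards [hXM] with ω hω
    exact (abs_of_nonneg hω.1).trans_le hω.2
  have hX_int : Integrable X μ := .of_bound hX M hX_abs
  have hY_abs : ∀ᵐ ω ∂μ, |Y ω| ≤ M := ae_bdd_abs_condExp_of_ae_bdd_abs hX_abs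
  have hexpX_int : Integrable (fun ω => Real.exp (l * X ω)) μ := by
    refine .of_bound (Real.continuous_exp.comp_aestronglyMeasurable (hX.const_mul l))
      (Real.exp (|l| * M)) ?_
    filter_upwards [hX_abs] with ω hω
    rw [Real.norm_eq_abs, Real.abs_exp, Real.exp_le_exp]
    exact mul_le_abs_mul_of_abs_le hω
  have hsplit : (fun ω => Real.exp (l * X ω - c * Y ω))
      = (fun ω => Real.exp (-(c * Y ω))) * fun ω => Real.exp (l * X ω) := by
    ext ω; simp only [Pi.mul_apply, ← Real.exp_add]; ring_nf
  have hexpY_meas : StronglyMeasurable[m] fun ω => Real.exp (-(c * Y ω)) :=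
    Real.continuous_exp.comp_stronglyMeasurable (stronglyMeasurable_condExp.const_mul c).neg
  have hpull := condExp_stronglyMeasurable_mul_of_bound hm hexpY_meas hexpX_int
    (Real.exp (|c| * M)) <| by
      filter_upwards [hY_abs] with ω hω
      rw [Real.norm_eq_abs, Real.abs_exp, Real.exp_le_exp, ← neg_mul]
      simpa using mul_le_abs_mul_of_abs_le (a := -c) hω
  have hchord : μ[fun ω => Real.exp (l * X ω) | m] ≤ᵐ[μ] fun ω => 1 + c * Y ω := by
    refine (condExp_mono hexpX_int ((integrable_const 1).add (hX_int.const_mul c)) ?_).trans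
      (condExp_one_add_mul_ae_eq hm hX_int c).le
    filter_upwards [hXM] with ω hω using hc _ hω
  rw [hsplit]
  filter_upwards [hpull, hchord] with ω hpullω hchordω
  rw [hpullω, Pi.mul_apply, Pi.one_apply]
  calc Real.exp (-(c * Y ω)) * μ[fun ω => Real.exp (l * X ω) | m] ω
      ≤ Real.exp (-(c * Y ω)) * Real.exp (c * Y ω) := by
        gcongr
        exact hchordω.trans (by linarith [Real.add_one_le_exp (c * Y ω)])
    _ = 1 := by rw [← Real.exp_add, neg_add_cancel, Real.exp_zero]

theorem supermartingale_exp_sum {ℱ : Filtration ℕ m0} {D : ℕ → Ω → ℝ} {C : ℝ}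
    (hD : ∀ i, StronglyMeasurable[ℱ (i + 1)] (D i)) (hDC : ∀ i, ∀ᵐ ω ∂μ, D i ω ≤ C)
    (hstep : ∀ i, μ[fun ω => Real.exp (D i ω) | ℱ i] ≤ᵐ[μ] 1) :
    Supermartingale (fun t ω => Real.exp (∑ i ∈ range t, D i ω)) ℱ μ := by
  set Z : ℕ → Ω → ℝ := fun t ω => Real.exp (∑ i ∈ range t, D i ω)
  have hZ_succ : ∀ t, Z (t + 1) = Z t * fun ω => Real.exp (D t ω) := fun t => by
    ext ω; simp [Z, sum_range_succ, Real.exp_add]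
  have hadp : StronglyAdapted ℱ Z := fun t =>
    Real.continuous_exp.comp_stronglyMeasurable <| Finset.stronglyMeasurable_fun_sum _
      fun i hi => (hD i).mono (ℱ.mono (mem_range.mp hi))
  have hexp_meas : ∀ t, AEStronglyMeasurable (fun ω => Real.exp (D t ω)) μ := fun t =>
    (Real.continuous_exp.comp_stronglyMeasurable ((hD t).mono (ℱ.le _))).aestronglyMeasurable
  have hexp_bdd : ∀ t, ∀ᵐ ω ∂μ, ‖Real.exp (D t ω)‖ ≤ Real.exp C := fun t => by
    filter_upwards [hDC t] with ω hω
    rw [Real.norm_eq_abs, Real.abs_exp]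
    exact Real.exp_le_exp.2 hω
  have hexp_int : ∀ t, Integrable (fun ω => Real.exp (D t ω)) μ := fun t =>
    .of_bound (hexp_meas t) _ (hexp_bdd t)
  have hint : ∀ t, Integrable (Z t) μ := by
    intro t
    induction t with
    | zero => simp [Z]
    | succ t ih =>
      rw [hZ_succ]
      exact ih.mul_bdd (hexp_meas t) (hexp_bdd t)
  refine supermartingale_nat hadp hint fun t => ?_
  have hpull := condExp_mul_of_stronglyMeasurable_left (hadp t) (hZ_succ t ▸ hint (t + 1))
    (hexp_int t)
  rw [← hZ_succ] at hpull
  filter_upwards [hpull, hstep t] with ω hpullω hstepω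
  rw [hpullω, Pi.mul_apply]
  exact mul_le_of_le_one_right (Real.exp_nonneg _) hstepω

end ConditionalExpectation

section BoundedIncrements

variable {Ω : Type*} {m0 : MeasurableSpace Ω} {μ : Measure Ω} [IsProbabilityMeasure μ]
  {ℱ : Filtration ℕ m0} {X : ℕ → Ω → ℝ} {M : ℝ}

theorem measure_exists_le_mul_sum_sub_mul_sum_condExp_le
    (hadp : ∀ i, StronglyMeasurable[ℱ (i + 1)] (X i)) (hbdd : ∀ i, ∀ᵐ ω ∂μ, X i ω ∈ Set.Icc 0 M)
    {l c : ℝ} (hc : ∀ x ∈ Set.Icc 0 M, Real.exp (l * x) ≤ 1 + c * x) (a : ℝ) :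
    μ {ω | ∃ t, a ≤ l * ∑ i ∈ range t, X i ω - c * ∑ i ∈ range t, μ[X i | ℱ i] ω}
      ≤ ENNReal.ofReal (Real.exp (-a)) := by
  set D : ℕ → Ω → ℝ := fun i ω => l * X i ω - c * μ[X i | ℱ i] ω
  have hD : ∀ i, StronglyMeasurable[ℱ (i + 1)] (D i) := fun i =>
    ((hadp i).const_mul l).sub ((stronglyMeasurable_condExp.mono (ℱ.mono i.le_succ)).const_mul c)
  have hDC : ∀ i, ∀ᵐ ω ∂μ, D i ω ≤ |l| * M + |c| * M := fun i => by
    have hX_abs : ∀ᵐ ω ∂μ, |X i ω| ≤ M := by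
      filter_upwards [hbdd i] with ω hω
      exact (abs_of_nonneg hω.1).trans_le hω.2
    filter_upwards [hX_abs, ae_bdd_abs_condExp_of_ae_bdd_abs (m := ℱ i) hX_abs] with ω hX hY
    have := mul_le_abs_mul_of_abs_le (a := -c) hY
    rw [abs_neg, neg_mul] at this
    linarith [mul_le_abs_mul_of_abs_le (a := l) hX]
  have hZ := supermartingale_exp_sum hD hDC fun i =>
    condExp_exp_mul_sub_mul_condExp_le_one (ℱ.le i)
      ((hadp i).mono (ℱ.le _)).aestronglyMeasurable (hbdd i) hc
  calc _ ≤ μ {ω | ∃ t, Real.exp a ≤ Real.exp (∑ i ∈ range t, D i ω)} := by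
        refine measure_mono fun ω ⟨t, ht⟩ => ⟨t, Real.exp_le_exp.2 ?_⟩
        simpa only [D, sum_sub_distrib, mul_sum] using ht
    _ ≤ ENNReal.ofReal ((∫ ω, Real.exp (∑ i ∈ range 0, D i ω) ∂μ) / Real.exp a) :=
        hZ.measure_exists_le_le (fun t ω => (Real.exp_pos _).le) (Real.exp_pos a)
    _ = ENNReal.ofReal (Real.exp (-a)) := by simp [Real.exp_neg]

theorem measure_exists_mul_mul_sum_condExp_le_mul_sum_le (hM : 0 < M)
    (hadp : ∀ i, StronglyMeasurable[ℱ (i + 1)] (X i)) (hbdd : ∀ i, ∀ᵐ ω ∂μ, X i ω ∈ Set.Icc 0 M)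
    {κ θ r h : ℝ} (hr0 : 0 ≤ r) (hr : r ≤ κ * θ - (Real.exp θ - 1)) (hh : 0 ≤ h) :
    μ {ω | ∃ t, κ * θ * ∑ i ∈ range t, μ[X i | ℱ i] ω ≤ θ * ∑ i ∈ range t, X i ω ∧
        h ≤ ∑ i ∈ range t, μ[X i | ℱ i] ω}
      ≤ ENNReal.ofReal (Real.exp (-(h * r / M))) := by
  refine le_trans (measure_mono ?_) (measure_exists_le_mul_sum_sub_mul_sum_condExp_le hadp hbdd
    (fun x hx => Real.exp_div_mul_le_one_add_mul (θ := θ) hM hx) (h * r / M))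
  rintro ω ⟨t, hdev, hT⟩
  refine ⟨t, ?_⟩
  set S := ∑ i ∈ range t, X i ω
  set T := ∑ i ∈ range t, μ[X i | ℱ i] ω
  have key : h * r ≤ θ * S - (Real.exp θ - 1) * T := by
    nlinarith [mul_le_mul_of_nonneg_right hr (hh.trans hT), mul_le_mul_of_nonneg_left hT hr0]
  calc h * r / M ≤ (θ * S - (Real.exp θ - 1) * T) / M := by gcongr
    _ = θ / M * S - (Real.exp θ - 1) / M * T := by ring

theorem measure_exists_one_add_mul_sum_condExp_le_sum_le (hM : 0 < M)
    (hadp : ∀ i, StronglyMeasurable[ℱ (i + 1)] (X i)) (hbdd : ∀ i, ∀ᵐ ω ∂μ, X i ω ∈ Set.Icc 0 M)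
    {ε h : ℝ} (hε0 : 0 ≤ ε) (hε : ε ≤ 2) (hh : 0 ≤ h) :
    μ {ω | ∃ t, (1 + ε) * ∑ i ∈ range t, μ[X i | ℱ i] ω ≤ ∑ i ∈ range t, X i ω ∧
        h ≤ ∑ i ∈ range t, μ[X i | ℱ i] ω}
      ≤ ENNReal.ofReal (Real.exp (-(h * ε ^ 2) / (5 * M))) := by
  have hrate := sq_div_five_le_one_add_mul_half_sub_exp_half (abs_le.2 ⟨by linarith, hε⟩)
  refine le_trans (measure_mono ?_) <| (measure_exists_mul_mul_sum_condExp_le_mul_sum_le hM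
    hadp hbdd (by positivity) hrate hh).trans_eq (by ring_nf)
  rintro ω ⟨t, hdev, hT⟩
  refine ⟨t, ?_, hT⟩
  rw [mul_comm _ (ε / 2), mul_assoc]
  exact mul_le_mul_of_nonneg_left hdev (by positivity)

theorem measure_exists_sum_le_one_sub_mul_sum_condExp_le (hM : 0 < M)
    (hadp : ∀ i, StronglyMeasurable[ℱ (i + 1)] (X i)) (hbdd : ∀ i, ∀ᵐ ω ∂μ, X i ω ∈ Set.Icc 0 M)
    {ε h : ℝ} (hε0 : 0 ≤ ε) (hε : ε ≤ 1) (hh : 0 ≤ h) :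
    μ {ω | ∃ t, ∑ i ∈ range t, X i ω ≤ (1 - ε) * ∑ i ∈ range t, μ[X i | ℱ i] ω ∧
        h ≤ ∑ i ∈ range t, μ[X i | ℱ i] ω}
      ≤ ENNReal.ofReal (Real.exp (-(h * ε ^ 2) / (5 * M))) := by
  have hrate := sq_div_five_le_one_sub_mul_neg_sub_exp_neg (abs_le.2 ⟨by linarith, hε⟩)
  refine le_trans (measure_mono ?_) <| (measure_exists_mul_mul_sum_condExp_le_mul_sum_le hM
    hadp hbdd (by positivity) hrate hh).trans_eq (by ring_nf)
  rintro ω ⟨t, hdev, hT⟩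
  refine ⟨t, ?_, hT⟩
  rw [mul_comm _ (-ε), mul_assoc]
  exact mul_le_mul_of_nonpos_left hdev (by linarith)

end BoundedIncrements

/-- General-`ε` form of the large deviation inequality: for uniformly bounded nonnegative
random variables `X i` (the `(i+1)`-st variable, `ℱ (i+1)`-measurable) with one-step
predictions `Y i = E[X i | ℱ i]`, for any `0 < ε ≤ 1/2` and `h > 0`, the probability that
for some `t` the ratio of partial sums deviates from `1` by at least `ε` while the sum of
predictions is at least `h` is at most `exp (-hε²/(5M) + 2)`. -/
theorem prop_predictions_general
    {Ω : Type*} {m0 : MeasurableSpace Ω} {μ : Measure Ω} [IsProbabilityMeasure μ]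
    (ℱ : Filtration ℕ m0) (X Y : ℕ → Ω → ℝ) (M : ℝ) (hM : 0 < M)
    (hadp : ∀ i : ℕ, StronglyMeasurable[ℱ (i + 1)] (X i))
    (hbdd : ∀ i : ℕ, ∀ᵐ ω ∂μ, 0 ≤ X i ω ∧ X i ω ≤ M)
    (hY : ∀ i : ℕ, Y i =ᵐ[μ] μ[X i | ℱ i])
    (ε : ℝ) (hε0 : 0 < ε) (hε : ε ≤ 1 / 2)
    (h : ℝ) (hh : 0 < h) :
    (μ {ω | ∃ t : ℕ,
        ε ≤ |(∑ i ∈ Finset.range t, X i ω) / (∑ i ∈ Finset.range t, Y i ω) - 1| ∧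
        h ≤ ∑ i ∈ Finset.range t, Y i ω}).toReal
      ≤ Real.exp (-(h * ε ^ 2) / (5 * M) + 2) := by
  have hupper := measure_exists_one_add_mul_sum_condExp_le_sum_le hM hadp hbdd hε0.le
    (by linarith) hh.le
  have hlower := measure_exists_sum_le_one_sub_mul_sum_condExp_le hM hadp hbdd hε0.le
    (by linarith) hh.le
  have hmeasure : μ {ω | ∃ t : ℕ,
      ε ≤ |(∑ i ∈ Finset.range t, X i ω) / (∑ i ∈ Finset.range t, Y i ω) - 1| ∧
      h ≤ ∑ i ∈ Finset.range t, Y i ω}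
        ≤ ENNReal.ofReal (2 * Real.exp (-(h * ε ^ 2) / (5 * M))) := by
    refine (measure_mono_ae ?_).trans <| (measure_union_le _ _).trans <|
      (add_le_add hupper hlower).trans_eq ?_
    · filter_upwards [ae_all_iff.2 hY] with ω hω ⟨t, hdev, hT⟩
      simp only [hω] at hdev hT
      exact (one_add_mul_le_or_le_one_sub_mul_of_le_abs_div_sub_one (hh.trans_le hT) hdev).imp
        (fun hup => ⟨t, hup, hT⟩) (fun hlow => ⟨t, hlow, hT⟩)
    · rw [← ENNReal.ofReal_add (Real.exp_nonneg _) (Real.exp_nonneg _), two_mul]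
  refine ENNReal.toReal_le_of_le_ofReal (Real.exp_nonneg _) <|
    hmeasure.trans (ENNReal.ofReal_le_ofReal ?_)
  rw [Real.exp_add, mul_comm]
  exact mul_le_mul_of_nonneg_left (by linarith [Real.add_one_le_exp 2]) (Real.exp_nonneg _)
end

section
/- In the relaxed adaptive allocation model with n bins, pool size at most 2^m and pool distributions μ_1,…,μ_N (N ≤ 2^m), define for each distribution ν on the bins and each time s: X_s^ν = Σ_{i≤s} ν(J_i) and V_s^ν = Σ_{i≤s} ⟨Q_i, ν⟩ = Σ_{i≤s} Σ_j Q_i(j)ν(j). Then with probability at least 1 − e^{2−4m}, simultaneously for every ν in the pool {μ_1,…,μ_N} and every s ≥ 1: if V_s^ν ≥ 100·‖ν‖_∞·m then X_s^ν ≥ V_s^ν/2. -/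
/-!
Fix a pool distribution `ν` with maximal mass `a`. The normalised increments `Y t = ν (J t) / a`
lie in `[0, 1]` and have conditional means `p t = ⟨Q t, ν⟩ / a`. By convexity of `exp`,
`E[e^{-Y t} | ℱ t] ≤ 1 - θ p t ≤ e^{-θ p t}` with `θ = 1 - e⁻¹`, so `exp (θ ∑ p - ∑ Y)` is a
nonnegative supermartingale started at `1`. Whenever `∑ p ≥ c` but `∑ Y < ∑ p / 2` it exceeds
`e^{(θ - 1/2) c}`, and Ville's maximal inequality bounds the probability of this by
`e^{-(1/2 - e⁻¹) c}`. For `c = 100 m` this is below `e^{-12 m}`, and a union bound over the at most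
`2 ^ m ≤ e ^ m` members of the pool gives `e^{2 - 4m}`.
-/

open MeasureTheory Finset

lemma Real.exp_neg_le_one_sub_mul {u : ℝ} (h0 : 0 ≤ u) (h1 : u ≤ 1) :
    Real.exp (-u) ≤ 1 - (1 - Real.exp (-1)) * u := by
  have := convexOn_exp.2 (Set.mem_univ 0) (Set.mem_univ (-1)) (sub_nonneg.2 h1) h0 (by ring)
  simp only [smul_eq_mul, mul_zero, mul_neg, mul_one, zero_add, Real.exp_zero] at this
  linarith

namespace MeasureTheory.Supermartingale

variable {Ω : Type*} {m0 : MeasurableSpace Ω} {μ : Measure Ω} [IsFiniteMeasure μ]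
  {ℱ : Filtration ℕ m0} {f : ℕ → Ω → ℝ}

theorem ville_ineq_finite (hf : Supermartingale f ℱ μ) (hnonneg : 0 ≤ f) {ε : ℝ} (hε : 0 ≤ ε)
    (N : ℕ) : ε * μ.real {ω | ∃ j ≤ N, ε ≤ f j ω} ≤ ∫ ω, f 0 ω ∂μ := by
  set τ : Ω → ℕ∞ := fun ω => (hittingBtwn f (Set.Ici ε) 0 N ω : ℕ)
  have hτ : IsStoppingTime ℱ τ :=
    hf.stronglyAdapted.adapted.isStoppingTime_hittingBtwn measurableSet_Ici
  have hτN : ∀ ω, τ ω ≤ N := fun ω => WithTop.coe_le_coe.2 (hittingBtwn_le ω)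
  have hstop : ∫ ω, stoppedValue f τ ω ∂μ ≤ ∫ ω, f 0 ω ∂μ := by
    have := hf.neg.expected_stoppedValue_mono (isStoppingTime_const ℱ 0) hτ
      (fun ω => WithTop.coe_le_coe.2 (Nat.zero_le _)) hτN
    simp only [stoppedValue, Pi.neg_apply, integral_neg, neg_le_neg_iff] at this
    exact this
  calc ε * μ.real {ω | ∃ j ≤ N, ε ≤ f j ω}
      ≤ ε * μ.real {ω | ε ≤ stoppedValue f τ ω} := by
        refine mul_le_mul_of_nonneg_left (measureReal_mono fun ω ⟨j, hj, hfj⟩ => ?_) hε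
        exact stoppedValue_hittingBtwn_mem ⟨j, ⟨Nat.zero_le _, hj⟩, hfj⟩
    _ ≤ ∫ ω, stoppedValue f τ ω ∂μ :=
        mul_meas_ge_le_integral_of_nonneg (ae_of_all _ fun ω => hnonneg _ ω)
          (integrable_stoppedValue ℕ hτ hf.integrable hτN) ε
    _ ≤ ∫ ω, f 0 ω ∂μ := hstop

theorem ville_ineq (hf : Supermartingale f ℱ μ) (hnonneg : 0 ≤ f) {ε : ℝ} (hε : 0 ≤ ε) :
    ε * μ.real {ω | ∃ j, ε ≤ f j ω} ≤ ∫ ω, f 0 ω ∂μ := by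
  have hunion : {ω | ∃ j, ε ≤ f j ω} = ⋃ N, {ω | ∃ j ≤ N, ε ≤ f j ω} := by
    ext ω
    simp only [Set.mem_ofPred_eq, Set.mem_iUnion]
    exact ⟨fun ⟨j, hj⟩ => ⟨j, j, le_rfl, hj⟩, fun ⟨_, j, _, hj⟩ => ⟨j, hj⟩⟩
  have hmono : Monotone fun N => {ω | ∃ j ≤ N, ε ≤ f j ω} :=
    fun _ _ hNM _ ⟨j, hj, hfj⟩ => ⟨j, hj.trans hNM, hfj⟩
  have hlim := (ENNReal.tendsto_toReal (measure_ne_top μ _)).comp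
    (tendsto_measure_iUnion_atTop (μ := μ) hmono)
  rw [hunion, measureReal_def]
  exact le_of_tendsto' (hlim.const_mul ε) fun N => hf.ville_ineq_finite hnonneg hε N

end MeasureTheory.Supermartingale

section

variable {Ω : Type*} {m0 : MeasurableSpace Ω} {μ : Measure Ω} [IsFiniteMeasure μ]

lemma integrable_exp_neg {Y : Ω → ℝ} (hY : Measurable Y) (hY0 : ∀ ω, 0 ≤ Y ω) :
    Integrable (fun ω => Real.exp (-Y ω)) μ :=
  .of_mem_Icc 0 1 (Real.measurable_exp.comp hY.neg).aemeasurable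
    (ae_of_all _ fun ω => ⟨(Real.exp_pos _).le, Real.exp_le_one_iff.2 (neg_nonpos.2 (hY0 ω))⟩)

theorem condExp_exp_neg_le {m : MeasurableSpace Ω} (hm : m ≤ m0) {Y p : Ω → ℝ}
    (hY : Measurable[m0] Y) (hY0 : ∀ ω, 0 ≤ Y ω) (hY1 : ∀ ω, Y ω ≤ 1) (hp : μ[Y | m] =ᵐ[μ] p) :
    μ[fun ω => Real.exp (-Y ω) | m] ≤ᵐ[μ] fun ω => Real.exp (-((1 - Real.exp (-1)) * p ω)) := by
  set θ := 1 - Real.exp (-1)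
  have hY_int : Integrable Y μ :=
    .of_mem_Icc 0 1 hY.aemeasurable (ae_of_all _ fun ω => ⟨hY0 ω, hY1 ω⟩)
  have hchord : μ[(fun _ => 1) - θ • Y | m] =ᵐ[μ] fun ω => 1 - θ * p ω := by
    filter_upwards [condExp_sub (integrable_const 1) (hY_int.smul θ) m,
      condExp_smul (m := m) (μ := μ) θ Y, hp] with ω hsub hsmul hpω
    rw [hsub, Pi.sub_apply, condExp_const hm, hsmul, Pi.smul_apply, hpω, smul_eq_mul]
  filter_upwards [condExp_mono (m := m) (integrable_exp_neg hY hY0)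
    ((integrable_const 1).sub (hY_int.smul θ))
    (ae_of_all _ fun ω => Real.exp_neg_le_one_sub_mul (hY0 ω) (hY1 ω)), hchord] with ω hmono hω
  rw [hω] at hmono
  linarith [Real.add_one_le_exp (-(θ * p ω))]

variable {ℱ : Filtration ℕ m0} {Y p : ℕ → Ω → ℝ}

theorem supermartingale_exp_sum_sub
    (hY_meas : ∀ t, Measurable[ℱ (t + 1)] (Y t)) (hY0 : ∀ t ω, 0 ≤ Y t ω)
    (hY1 : ∀ t ω, Y t ω ≤ 1) (hp_meas : ∀ t, Measurable[ℱ t] (p t)) (hp1 : ∀ t ω, p t ω ≤ 1)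
    (hp : ∀ t, μ[Y t | ℱ t] =ᵐ[μ] p t) :
    Supermartingale (fun s ω => Real.exp ((1 - Real.exp (-1)) * ∑ r ∈ range s, p r ω
      - ∑ r ∈ range s, Y r ω)) ℱ μ := by
  set θ := 1 - Real.exp (-1)
  have hθ : 0 ≤ θ := sub_nonneg.2 (Real.exp_le_one_iff.2 (by norm_num))
  set f : ℕ → Ω → ℝ := fun s ω => Real.exp (θ * ∑ r ∈ range s, p r ω - ∑ r ∈ range s, Y r ω)
  have hf_meas (s : ℕ) : Measurable[ℱ s] (f s) := by
    refine Real.measurable_exp.comp ((Measurable.const_mul ?_ θ).sub ?_)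
    · exact Finset.measurable_sum _ fun r hr => (hp_meas r).mono (ℱ.mono (mem_range.1 hr).le) le_rfl
    · exact Finset.measurable_sum _ fun r hr => (hY_meas r).mono (ℱ.mono (mem_range.1 hr)) le_rfl
  have hf_le (s : ℕ) (ω : Ω) : f s ω ≤ Real.exp (θ * s) := by
    refine Real.exp_le_exp.2 ?_
    have hp_sum : ∑ r ∈ range s, p r ω ≤ s := by
      simpa using Finset.sum_le_card_nsmul (range s) (p · ω) 1 fun r _ => hp1 r ω
    have hY_sum : 0 ≤ ∑ r ∈ range s, Y r ω := Finset.sum_nonneg fun r _ => hY0 r ω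
    nlinarith
  have hf_int (s : ℕ) : Integrable (f s) μ :=
    .of_mem_Icc 0 (Real.exp (θ * s)) ((hf_meas s).mono (ℱ.le s) le_rfl).aemeasurable
      (ae_of_all _ fun ω => ⟨(Real.exp_pos _).le, hf_le s ω⟩)
  refine supermartingale_nat (fun s => (hf_meas s).stronglyMeasurable) hf_int fun t => ?_
  set G : Ω → ℝ := fun ω => f t ω * Real.exp (θ * p t ω)
  have hG_meas : Measurable[ℱ t] G :=
    (hf_meas t).mul (Real.measurable_exp.comp ((hp_meas t).const_mul θ))
  have hY_meas' : Measurable (Y t) := (hY_meas t).mono (ℱ.le _) le_rfl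
  have hsplit : f (t + 1) = G * fun ω => Real.exp (-Y t ω) := by
    funext ω
    simp only [f, G, Pi.mul_apply, ← Real.exp_add, sum_range_succ]
    ring_nf
  rw [hsplit]
  filter_upwards [condExp_mul_of_stronglyMeasurable_left hG_meas.stronglyMeasurable
      (hsplit ▸ hf_int (t + 1)) (integrable_exp_neg hY_meas' (hY0 t)),
    condExp_exp_neg_le (ℱ.le t) hY_meas' (hY0 t) (hY1 t) (hp t)] with ω hpull hstep
  calc μ[G * fun ω => Real.exp (-Y t ω) | ℱ t] ω
      = G ω * μ[fun ω => Real.exp (-Y t ω) | ℱ t] ω := hpull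
    _ ≤ G ω * Real.exp (-(θ * p t ω)) :=
        mul_le_mul_of_nonneg_left hstep (mul_nonneg (Real.exp_pos _).le (Real.exp_pos _).le)
    _ = f t ω := by simp only [G, mul_assoc, ← Real.exp_add, add_neg_cancel, Real.exp_zero,
        mul_one]

variable [IsProbabilityMeasure μ]

theorem measureReal_exists_sum_lt_half_sum_le
    (hY_meas : ∀ t, Measurable[ℱ (t + 1)] (Y t)) (hY0 : ∀ t ω, 0 ≤ Y t ω)
    (hY1 : ∀ t ω, Y t ω ≤ 1) (hp_meas : ∀ t, Measurable[ℱ t] (p t)) (hp1 : ∀ t ω, p t ω ≤ 1)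
    (hp : ∀ t, μ[Y t | ℱ t] =ᵐ[μ] p t) (c : ℝ) :
    μ.real {ω | ∃ s, c ≤ ∑ r ∈ range s, p r ω ∧
        ∑ r ∈ range s, Y r ω < (∑ r ∈ range s, p r ω) / 2}
      ≤ Real.exp (-((1 / 2 - Real.exp (-1)) * c)) := by
  set κ := 1 / 2 - Real.exp (-1) with hκ_def
  have hκ : 0 < κ := sub_pos.2 Real.exp_neg_one_lt_half
  have hville := (supermartingale_exp_sum_sub hY_meas hY0 hY1 hp_meas hp1 hp).ville_ineq
    (fun s ω => (Real.exp_pos _).le) (Real.exp_pos (κ * c)).le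
  simp only [range_zero, sum_empty, mul_zero, sub_zero, Real.exp_zero, integral_const,
    probReal_univ, smul_eq_mul, mul_one] at hville
  have hsub : {ω | ∃ s, c ≤ ∑ r ∈ range s, p r ω ∧
        ∑ r ∈ range s, Y r ω < (∑ r ∈ range s, p r ω) / 2}
      ⊆ {ω | ∃ s, Real.exp (κ * c) ≤ Real.exp ((1 - Real.exp (-1)) * ∑ r ∈ range s, p r ω
          - ∑ r ∈ range s, Y r ω)} := by
    rintro ω ⟨s, hc, hlt⟩
    refine ⟨s, Real.exp_le_exp.2 ?_⟩
    have hκc : κ * c ≤ κ * ∑ r ∈ range s, p r ω := mul_le_mul_of_nonneg_left hc hκ.le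
    have hκ_sum : κ * ∑ r ∈ range s, p r ω
        = (1 - Real.exp (-1)) * ∑ r ∈ range s, p r ω - (∑ r ∈ range s, p r ω) / 2 := by
      rw [hκ_def]; ring
    linarith
  calc _ ≤ _ := measureReal_mono hsub
    _ ≤ Real.exp (-(κ * c)) := by
        rw [Real.exp_neg (κ * c), ← one_div, le_div_iff₀ (Real.exp_pos _), mul_comm]
        exact hville

end

theorem condExp_comp_eq_sum {ι Ω : Type*} [Fintype ι] [DecidableEq ι] [MeasurableSpace ι]
    [DiscreteMeasurableSpace ι] {m m0 : MeasurableSpace Ω} {μ : Measure Ω} [IsFiniteMeasure μ]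
    {X : Ω → ι} (hX : Measurable X) {q : Ω → ι → ℝ}
    (hq : ∀ i, μ[fun ω => if X ω = i then (1 : ℝ) else 0 | m] =ᵐ[μ] fun ω => q ω i)
    (g : ι → ℝ) :
    μ[fun ω => g (X ω) | m] =ᵐ[μ] fun ω => ∑ i, q ω i * g i := by
  set e : ι → Ω → ℝ := fun i ω => if X ω = i then 1 else 0
  have he_int (i : ι) : Integrable (e i) μ :=
    .of_mem_Icc 0 1 ((Measurable.of_discrete (f := fun j => if j = i then (1 : ℝ) else 0)).comp
      hX).aemeasurable
      (ae_of_all _ fun ω => by by_cases h : X ω = i <;> simp [e, h])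
  have hqe (i : ι) : μ[e i | m] =ᵐ[μ] fun ω => q ω i := hq i
  have hdecomp : (fun ω => g (X ω)) = ∑ i, g i • e i := by
    funext ω
    simp [e]
  rw [hdecomp]
  filter_upwards [condExp_finsetSum (s := univ) (fun i _ => (he_int i).smul (g i)) m,
    ae_all_iff.2 fun i => condExp_smul (m := m) (μ := μ) (g i) (e i), ae_all_iff.2 hqe]
    with ω hsum hsmul hqω
  simp only [hsum, Finset.sum_apply, hsmul, Pi.smul_apply, hqω, smul_eq_mul, mul_comm]

section Allocation

variable {ι Ω : Type*} [Fintype ι] [DecidableEq ι] [MeasurableSpace ι] [DiscreteMeasurableSpace ι]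
  {m0 : MeasurableSpace Ω} {μ : Measure Ω} [IsProbabilityMeasure μ] {ℱ : Filtration ℕ m0}
  {Q : ℕ → Ω → ι → ℝ} {J : ℕ → Ω → ι}

theorem measureReal_exists_sum_weight_lt_half_le (hQ_nonneg : ∀ t ω i, 0 ≤ Q t ω i)
    (hQ_sum : ∀ t ω, ∑ i, Q t ω i = 1) (hQ_meas : ∀ t i, Measurable[ℱ t] fun ω => Q t ω i)
    (hJ_meas : ∀ t, Measurable[ℱ (t + 1)] (J t))
    (hJ_law : ∀ t i, (μ[(fun ω => if J t ω = i then (1 : ℝ) else 0) | ℱ t])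
        =ᵐ[μ] fun ω => Q t ω i)
    {ν : ι → ℝ} (hν0 : ∀ i, 0 ≤ ν i) (hν1 : ∑ i, ν i = 1) (c : ℝ) :
    μ.real {ω | ∃ s, c * (⨆ i, ν i) ≤ ∑ r ∈ range s, ∑ i, Q r ω i * ν i ∧
        ∑ r ∈ range s, ν (J r ω) < (∑ r ∈ range s, ∑ i, Q r ω i * ν i) / 2}
      ≤ Real.exp (-((1 / 2 - Real.exp (-1)) * c)) := by
  set a := ⨆ i, ν i
  have hle_a (i : ι) : ν i ≤ a := le_ciSup (Finite.bddAbove_range ν) i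
  have ha : 0 < a := by
    obtain ⟨i, -, hi⟩ := exists_lt_of_sum_lt (s := univ) (f := 0) (g := ν) (by simp [hν1])
    exact hi.trans_le (hle_a i)
  have hdev := measureReal_exists_sum_lt_half_sum_le (μ := μ) (ℱ := ℱ)
    (Y := fun t ω => ν (J t ω) / a) (p := fun t ω => ∑ i, Q t ω i * (ν i / a))
    (fun t => (Measurable.of_discrete.comp (hJ_meas t)).div_const a)
    (fun t ω => div_nonneg (hν0 _) ha.le) (fun t ω => (div_le_one ha).2 (hle_a _))
    (fun t => Finset.measurable_sum _ fun i _ => (hQ_meas t i).mul_const _)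
    (fun t ω => ?_)
    (fun t => condExp_comp_eq_sum ((hJ_meas t).mono (ℱ.le _) le_rfl) (hJ_law t) fun i => ν i / a) c
  · refine (measureReal_mono ?_).trans hdev
    rintro ω ⟨s, hc, hlt⟩
    refine ⟨s, ?_, ?_⟩ <;> simp only [mul_div_assoc', ← Finset.sum_div]
    · exact (le_div_iff₀ ha).2 hc
    · rw [div_right_comm]
      exact (div_lt_div_iff_of_pos_right ha).2 hlt
  · calc ∑ i, Q t ω i * (ν i / a) ≤ ∑ i, Q t ω i :=
          Finset.sum_le_sum fun i _ => mul_le_of_le_one_right (hQ_nonneg t ω i)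
            ((div_le_one ha).2 (hle_a i))
      _ = 1 := hQ_sum t ω

end Allocation

lemma one_sub_le_measureReal_of_measureReal_compl_le {Ω : Type*} {m0 : MeasurableSpace Ω}
    {μ : Measure Ω} [IsProbabilityMeasure μ] {s : Set Ω} {δ : ℝ} (h : μ.real sᶜ ≤ δ) :
    1 - δ ≤ μ.real s := by
  have := measureReal_union_le (μ := μ) s sᶜ
  simp only [Set.union_compl_self, probReal_univ] at this
  linarith

lemma two_pow_mul_exp_le (m : ℕ) :
    2 ^ m * Real.exp (-((1 / 2 - Real.exp (-1)) * (100 * m))) ≤ Real.exp (2 - 4 * m) := by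
  have h2 : (2 : ℝ) ^ m ≤ Real.exp m := by
    rw [← Real.exp_one_pow]
    exact pow_le_pow_left₀ (by norm_num) (by linarith [Real.add_one_le_exp 1]) m
  calc 2 ^ m * Real.exp (-((1 / 2 - Real.exp (-1)) * (100 * m)))
      ≤ Real.exp m * Real.exp (-((1 / 2 - Real.exp (-1)) * (100 * m))) := by gcongr
    _ ≤ Real.exp (2 - 4 * m) := by
        rw [← Real.exp_add]
        gcongr
        nlinarith [Real.exp_neg_one_lt_d9, (Nat.cast_nonneg m : (0 : ℝ) ≤ m)]

theorem lemma_Xs_Vs_approx_general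
    {Ω : Type*} {m0 : MeasurableSpace Ω} {μ : Measure Ω} [IsProbabilityMeasure μ]
    (ℱ : Filtration ℕ m0) (n m : ℕ)
    (pool : Finset (Fin n → ℝ)) (hpool_card : pool.card ≤ 2 ^ m)
    (hpool_nonneg : ∀ ν ∈ pool, ∀ i, 0 ≤ ν i)
    (hpool_sum : ∀ ν ∈ pool, ∑ i, ν i = 1)
    (Q : ℕ → Ω → Fin n → ℝ) (J : ℕ → Ω → Fin n)
    (hQ_mem : ∀ t ω, Q t ω ∈ pool)
    (hQ_meas : ∀ t i, Measurable[ℱ t] fun ω => Q t ω i)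
    (hJ_meas : ∀ t, Measurable[ℱ (t + 1)] (J t))
    (hJ_law : ∀ t i, (μ[(fun ω => if J t ω = i then (1 : ℝ) else 0) | ℱ t])
        =ᵐ[μ] fun ω => Q t ω i) :
    1 - Real.exp (2 - 4 * m)
      ≤ (μ {ω | ∀ ν ∈ pool, ∀ s : ℕ,
            100 * (⨆ i, ν i) * m ≤ ∑ r ∈ Finset.range s, ∑ i, Q r ω i * ν i →
            (∑ r ∈ Finset.range s, ∑ i, Q r ω i * ν i) / 2
              ≤ ∑ r ∈ Finset.range s, ν (J r ω)}).toReal := by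
  rw [← measureReal_def]
  refine one_sub_le_measureReal_of_measureReal_compl_le ?_
  set bad : (Fin n → ℝ) → Set Ω := fun ν => {ω | ∃ s, 100 * m * (⨆ i, ν i)
    ≤ ∑ r ∈ range s, ∑ i, Q r ω i * ν i ∧
      ∑ r ∈ range s, ν (J r ω) < (∑ r ∈ range s, ∑ i, Q r ω i * ν i) / 2}
  refine (measureReal_mono (s₂ := ⋃ ν ∈ pool, bad ν) ?_ (measure_ne_top μ _)).trans ?_
  · intro ω hω
    simp only [Set.mem_compl_iff, Set.mem_ofPred_eq, not_forall, not_le] at hω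
    obtain ⟨ν, hν, s, hV, hX⟩ := hω
    exact Set.mem_biUnion hν ⟨s, by linarith, hX⟩
  calc _ ≤ ∑ ν ∈ pool, μ.real (bad ν) := measureReal_biUnion_finset_le pool bad
    _ ≤ ∑ _ν ∈ pool, Real.exp (-((1 / 2 - Real.exp (-1)) * (100 * m))) :=
        sum_le_sum fun ν hν => measureReal_exists_sum_weight_lt_half_le
          (fun t ω => hpool_nonneg _ (hQ_mem t ω)) (fun t ω => hpool_sum _ (hQ_mem t ω))
          hQ_meas hJ_meas hJ_law (hpool_nonneg ν hν) (hpool_sum ν hν) (100 * m)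
    _ ≤ 2 ^ m * Real.exp (-((1 / 2 - Real.exp (-1)) * (100 * m))) := by
        rw [sum_const, nsmul_eq_mul]
        gcongr
        exact_mod_cast hpool_card
    _ ≤ Real.exp (2 - 4 * m) := two_pow_mul_exp_le m

/-- Lemma 3.1 of the paper: in the relaxed adaptive allocation model with `n` bins and a
pool of at most `2^m` strategies, writing `X_s^ν = ∑_{i<s} ν (J i)` and
`V_s^ν = ∑_{i<s} ⟨Q i, ν⟩`, with probability at least `1 - e^{2-4m}`, simultaneously for
every strategy `ν` in the pool and every time `s`: if `V_s^ν ≥ 100 ‖ν‖_∞ m` then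
`X_s^ν ≥ V_s^ν / 2`. -/
theorem lemma_Xs_Vs_approx
    {Ω : Type*} {m0 : MeasurableSpace Ω} {μ : Measure Ω} [IsProbabilityMeasure μ]
    (ℱ : Filtration ℕ m0) (n m : ℕ) (hn : 0 < n)
    (pool : Finset (Fin n → ℝ)) (hpool_card : pool.card ≤ 2 ^ m)
    (hpool_nonneg : ∀ ν ∈ pool, ∀ i, 0 ≤ ν i)
    (hpool_sum : ∀ ν ∈ pool, ∑ i, ν i = 1)
    (Q : ℕ → Ω → Fin n → ℝ) (J : ℕ → Ω → Fin n)
    (hQ_mem : ∀ t ω, Q t ω ∈ pool)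
    (hQ_meas : ∀ t i, Measurable[ℱ t] fun ω => Q t ω i)
    (hJ_meas : ∀ t, Measurable[ℱ (t + 1)] (J t))
    (hJ_law : ∀ t i, (μ[(fun ω => if J t ω = i then (1 : ℝ) else 0) | ℱ t])
        =ᵐ[μ] fun ω => Q t ω i) :
    1 - Real.exp (2 - 4 * m)
      ≤ (μ {ω | ∀ ν ∈ pool, ∀ s : ℕ,
            100 * (⨆ i, ν i) * m ≤ ∑ r ∈ Finset.range s, ∑ i, Q r ω i * ν i →
            (∑ r ∈ Finset.range s, ∑ i, Q r ω i * ν i) / 2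
              ≤ ∑ r ∈ Finset.range s, ν (J r ω)}).toReal :=
  lemma_Xs_Vs_approx_general ℱ n m pool hpool_card hpool_nonneg hpool_sum Q J hQ_mem hQ_meas hJ_meas
    hJ_law
end

section
/- Consider the relaxed adaptive allocation model with n balls and n bins, pool size at most 2^m with m ≥ log n, and all pool distributions having point masses at most k/n. There is an absolute constant A > 0 such that for all sufficiently large n, for every L = L(n) ≥ 1 and every time t ≤ n with t ≥ max(500·k·m, 30·√(L·n·log n)), the probability that simultaneously Col_2(t) < t²/(16n) and max_i N_t(i) < L is at most A·n^{−4}. -/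
/-!
On the event that every load stays below `L`, `Col₂(t) = ∑_{r<t} N_r(J_r)` with `N_r` capped at
`L`. For an adapted `g` with values in `[0, c]` the process
`exp ((½ ∑_{r<s} ⟨Q_r, g_r⟩ - ∑_{r<s} g_r(J_r)) / c)` is a supermartingale, because
`exp (-x) ≤ 1 - x/2` on `[0, 1]`; so, except with probability `e^{-a}`, the sum
`∑ g_r(J_r)` exceeds half its compensator minus `c a`. With `g = min (N_r, L)` this gives
`Col₂(t) ≳ ½ ∑_r ⟨Q_r, N_r⟩ = ½ ∑_{p<r} Q_r(J_p)`. The strategy `Q_r` is random, so the bound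
for `g ≡ ν` is taken for every `ν` in the pool and every time simultaneously (a union bound over
`2^m · n` events, which is where `m ≥ log n` enters) and then used with `ν = Q_r`; this gives
`∑_{p<r} Q_r(J_p) ≳ ½ ∑_{p<r} ⟨Q_p, Q_r⟩`, and by Cauchy–Schwarz
`∑_{p<r} ⟨Q_p, Q_r⟩ ≥ (t² - t k) / (2n)`.
-/

open MeasureTheory Finset

/-- The load of bin `i` after `t` rounds, when ball `s` is placed in bin `J s ω`. -/
def binLoad {Ω : Type*} {n : ℕ} (J : ℕ → Ω → Fin n) (t : ℕ) (i : Fin n) (ω : Ω) : ℕ :=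
  ((Finset.range t).filter fun s => J s ω = i).card

/-- The number of collisions (pairs of balls sharing a bin) after `t` rounds. -/
def collisions {Ω : Type*} {n : ℕ} (J : ℕ → Ω → Fin n) (t : ℕ) (ω : Ω) : ℕ :=
  ∑ i, Nat.choose (binLoad J t i ω) 2

section Loads

variable {Ω : Type*} {n : ℕ} (J : ℕ → Ω → Fin n)

lemma binLoad_eq_sum_ite (t : ℕ) (i : Fin n) (ω : Ω) :
    (binLoad J t i ω : ℝ) = ∑ r ∈ range t, if J r ω = i then (1 : ℝ) else 0 := by
  simp [binLoad, Finset.sum_boole]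

lemma binLoad_mono {s t : ℕ} (h : s ≤ t) (i : Fin n) (ω : Ω) :
    binLoad J s i ω ≤ binLoad J t i ω :=
  card_le_card (filter_subset_filter _ (range_subset_range.2 h))

lemma sum_range_comp_eq_sum_binLoad_mul (t : ℕ) (ω : Ω) (f : Fin n → ℝ) :
    ∑ r ∈ range t, f (J r ω) = ∑ i, (binLoad J t i ω : ℝ) * f i := by
  rw [← sum_fiberwise (range t) (fun r => J r ω)]
  refine sum_congr rfl fun i _ => ?_
  rw [sum_congr rfl fun r hr => congrArg f (mem_filter.1 hr).2, sum_const, nsmul_eq_mul]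
  rfl

lemma binLoad_succ (t : ℕ) (i : Fin n) (ω : Ω) :
    binLoad J (t + 1) i ω = binLoad J t i ω + if J t ω = i then 1 else 0 := by
  simp only [binLoad, range_add_one, filter_insert]
  split_ifs <;> simp [card_insert_of_notMem]

lemma collisions_eq_sum_binLoad (t : ℕ) (ω : Ω) :
    collisions J t ω = ∑ r ∈ range t, binLoad J r (J r ω) ω := by
  induction t with
  | zero => simp [collisions, binLoad]
  | succ t ih =>
    have hnew : binLoad J t (J t ω) ω = ∑ i, if J t ω = i then binLoad J t i ω else 0 := by
      simp
    rw [sum_range_succ, ← ih, collisions, collisions, hnew, ← sum_add_distrib]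
    refine sum_congr rfl fun i _ => ?_
    rw [binLoad_succ]
    split_ifs <;> simp [Nat.choose_succ_succ', add_comm]

end Loads

lemma sq_sum_range_eq (a : ℕ → ℝ) (t : ℕ) :
    (∑ r ∈ range t, a r) ^ 2 = ∑ r ∈ range t, (2 * (∑ p ∈ range r, a p) * a r + a r ^ 2) := by
  induction t with
  | zero => simp
  | succ t ih => rw [sum_range_succ, sum_range_succ, ← ih]; ring

lemma sq_le_sum_pairwise_overlap {n k : ℕ} (q : ℕ → Fin n → ℝ) (hq0 : ∀ r i, 0 ≤ q r i)
    (hq1 : ∀ r, ∑ i, q r i = 1) (hqk : ∀ r i, q r i ≤ k / n) (t : ℕ) :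
    (t : ℝ) ^ 2 ≤ 2 * n * ∑ r ∈ range t, ∑ p ∈ range r, ∑ i, q p i * q r i + t * k := by
  have htotal : ∑ i, ∑ r ∈ range t, q r i = t := by simp [sum_comm (s := univ), hq1]
  have hdiag : ∑ r ∈ range t, ∑ i, q r i ^ 2 ≤ t * (k / n) := by
    calc ∑ r ∈ range t, ∑ i, q r i ^ 2 ≤ ∑ r ∈ range t, ∑ i, k / n * q r i :=
          sum_le_sum fun r _ => sum_le_sum fun i _ => by
            rw [sq]; exact mul_le_mul_of_nonneg_right (hqk r i) (hq0 r i)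
      _ = t * (k / n) := by simp [← mul_sum, hq1]
  have hnk : (n : ℝ) * (t * (k / n)) ≤ t * k := by
    rcases eq_or_ne n 0 with rfl | hn
    · rw [Nat.cast_zero, zero_mul]
      positivity
    · rw [mul_left_comm, mul_div_cancel₀ _ (Nat.cast_ne_zero.2 hn)]
  calc (t : ℝ) ^ 2 = (∑ i, ∑ r ∈ range t, q r i) ^ 2 := by rw [htotal]
    _ ≤ n * ∑ i, (∑ r ∈ range t, q r i) ^ 2 := by
        simpa using sq_sum_le_card_mul_sum_sq (s := univ) (f := fun i => ∑ r ∈ range t, q r i)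
    _ = n * (2 * ∑ r ∈ range t, ∑ p ∈ range r, ∑ i, q p i * q r i
          + ∑ r ∈ range t, ∑ i, q r i ^ 2) := by
        simp only [sq_sum_range_eq]
        rw [sum_comm]
        simp only [sum_add_distrib, mul_sum, sum_mul]
        congr 2
        refine sum_congr rfl fun r _ => ?_
        rw [sum_comm]
        exact sum_congr rfl fun p _ => sum_congr rfl fun i _ => by ring
    _ ≤ _ := by nlinarith

lemma Real.exp_neg_le_one_sub_half {x : ℝ} (h0 : 0 ≤ x) (h1 : x ≤ 1) :
    Real.exp (-x) ≤ 1 - x / 2 := by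
  have hinv : Real.exp (-x) * Real.exp x = 1 := by
    rw [← Real.exp_add, neg_add_cancel, Real.exp_zero]
  nlinarith [Real.add_one_le_exp x, Real.exp_pos (-x)]

lemma sum_mul_exp_neg_le {n : ℕ} {q g : Fin n → ℝ} (hq0 : ∀ i, 0 ≤ q i) (hq1 : ∑ i, q i = 1)
    (hg0 : ∀ i, 0 ≤ g i) (hg1 : ∀ i, g i ≤ 1) :
    ∑ i, q i * Real.exp (-g i) ≤ Real.exp (-(∑ i, q i * g i) / 2) :=
  calc ∑ i, q i * Real.exp (-g i) ≤ ∑ i, q i * (1 - g i / 2) :=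
        sum_le_sum fun i _ => mul_le_mul_of_nonneg_left
          (Real.exp_neg_le_one_sub_half (hg0 i) (hg1 i)) (hq0 i)
    _ = -(∑ i, q i * g i) / 2 + 1 := by
        simp only [mul_sub, mul_one, sum_sub_distrib, hq1, mul_div_assoc', ← sum_div]
        ring
    _ ≤ Real.exp (-(∑ i, q i * g i) / 2) := Real.add_one_le_exp _

def compensator {Ω : Type*} {n : ℕ} (Q g : ℕ → Ω → Fin n → ℝ) (s : ℕ) (ω : Ω) : ℝ :=
  ∑ r ∈ range s, ∑ i, Q r ω i * g r ω i

def hitSum {Ω : Type*} {n : ℕ} (g : ℕ → Ω → Fin n → ℝ) (J : ℕ → Ω → Fin n) (s : ℕ) (ω : Ω) : ℝ :=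
  ∑ r ∈ range s, g r ω (J r ω)

section AllocationProcess

variable {Ω : Type*} [m0 : MeasurableSpace Ω] {n : ℕ}

/-- Ball `t` is numbered from `0` and placed given `ℱ t`, the paper's `F_{t-1}`. -/
structure IsAllocationProcess (μ : Measure Ω) (ℱ : Filtration ℕ m0) (Q : ℕ → Ω → Fin n → ℝ)
    (J : ℕ → Ω → Fin n) : Prop where
  nonneg : ∀ t ω i, 0 ≤ Q t ω i
  sum_eq_one : ∀ t ω, ∑ i, Q t ω i = 1
  measurable_strategy : ∀ t i, Measurable[ℱ t] fun ω => Q t ω i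
  measurable_ball : ∀ t, Measurable[ℱ (t + 1)] (J t)
  condExp_ball : ∀ t i, μ[(fun ω => if J t ω = i then (1 : ℝ) else 0) | ℱ t] =ᵐ[μ] fun ω => Q t ω i

namespace IsAllocationProcess

variable {μ : Measure Ω} {ℱ : Filtration ℕ m0} {Q : ℕ → Ω → Fin n → ℝ} {J : ℕ → Ω → Fin n}

lemma le_one (hP : IsAllocationProcess μ ℱ Q J) (t : ℕ) (ω : Ω) (i : Fin n) : Q t ω i ≤ 1 :=
  hP.sum_eq_one t ω ▸ single_le_sum (fun j _ => hP.nonneg t ω j) (mem_univ i)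

lemma measurableSet_ball_eq (hP : IsAllocationProcess μ ℱ Q J) (t : ℕ) (i : Fin n) :
    MeasurableSet[ℱ (t + 1)] {ω | J t ω = i} :=
  hP.measurable_ball t (measurableSet_singleton i)

lemma measurable_comp_ball (hP : IsAllocationProcess μ ℱ Q J) {s : ℕ} {g : Ω → Fin n → ℝ}
    (hg : ∀ i, Measurable[ℱ s] fun ω => g ω i) :
    Measurable[ℱ (s + 1)] fun ω => g ω (J s ω) := by
  have hsum : (fun ω => g ω (J s ω)) = fun ω => ∑ i, if J s ω = i then g ω i else 0 := by
    simp
  rw [hsum]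
  exact Finset.measurable_sum _ fun i _ =>
    Measurable.ite (hP.measurableSet_ball_eq s i) ((hg i).mono (ℱ.mono s.le_succ) le_rfl)
      measurable_const

lemma measurable_binLoad (hP : IsAllocationProcess μ ℱ Q J) (t : ℕ) (i : Fin n) :
    Measurable[ℱ t] fun ω => (binLoad J t i ω : ℝ) := by
  simp_rw [binLoad_eq_sum_ite]
  exact Finset.measurable_sum _ fun r hr => Measurable.ite
    (ℱ.mono (mem_range.1 hr) _ (hP.measurableSet_ball_eq r i)) measurable_const measurable_const

lemma integral_comp_ball (hP : IsAllocationProcess μ ℱ Q J) [IsFiniteMeasure μ] {s : ℕ}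
    {F : Ω → Fin n → ℝ} (hF : ∀ i, Measurable[ℱ s] fun ω => F ω i) (C : ℝ)
    (hFC : ∀ ω i, |F ω i| ≤ C) :
    ∫ ω, F ω (J s ω) ∂μ = ∫ ω, ∑ i, Q s ω i * F ω i ∂μ := by
  have hind : ∀ i, StronglyMeasurable fun ω => if J s ω = i then (1 : ℝ) else 0 := fun i =>
    (Measurable.ite (ℱ.le _ _ (hP.measurableSet_ball_eq s i)) measurable_const
      measurable_const).stronglyMeasurable
  have hind_le : ∀ i ω, ‖if J s ω = i then (1 : ℝ) else 0‖ ≤ 1 := fun i ω => by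
    split_ifs <;> simp
  have hFi : ∀ i, Integrable (fun ω => F ω i) μ := fun i =>
    .of_bound ((hF i).mono (ℱ.le s) le_rfl).aestronglyMeasurable C (ae_of_all _ (hFC · i))
  have hFint : ∀ i, Integrable (fun ω => F ω i * if J s ω = i then (1 : ℝ) else 0) μ := fun i =>
    (hFi i).mul_bdd (hind i).aestronglyMeasurable (ae_of_all _ (hind_le i))
  have hQint : ∀ i, Integrable (fun ω => Q s ω i * F ω i) μ := fun i =>
    (hFi i).bdd_mul ((hP.measurable_strategy s i).mono (ℱ.le s) le_rfl).aestronglyMeasurable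
      (c := 1) (ae_of_all _ fun ω => by
        rw [Real.norm_of_nonneg (hP.nonneg s ω i)]; exact hP.le_one s ω i)
  have hstep : ∀ i, ∫ ω, F ω i * (if J s ω = i then (1 : ℝ) else 0) ∂μ
      = ∫ ω, Q s ω i * F ω i ∂μ := by
    intro i
    rw [← integral_condExp (ℱ.le s)]
    refine integral_congr_ae ?_
    filter_upwards [condExp_mul_of_stronglyMeasurable_left (hF i).stronglyMeasurable (hFint i)
      (.of_bound (hind i).aestronglyMeasurable 1 (ae_of_all _ (hind_le i))),
      hP.condExp_ball s i] with ω hω hQ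
    exact hω.trans (by rw [Pi.mul_apply, hQ, mul_comm])
  calc ∫ ω, F ω (J s ω) ∂μ = ∫ ω, ∑ i, F ω i * (if J s ω = i then (1 : ℝ) else 0) ∂μ := by
        simp
    _ = ∫ ω, ∑ i, Q s ω i * F ω i ∂μ := by
        rw [integral_finsetSum _ fun i _ => hFint i, integral_finsetSum _ fun i _ => hQint i]
        exact sum_congr rfl fun i _ => hstep i

lemma measurable_hitSum (hP : IsAllocationProcess μ ℱ Q J) {g : ℕ → Ω → Fin n → ℝ}
    (hgm : ∀ s i, Measurable[ℱ s] fun ω => g s ω i) (s : ℕ) :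
    Measurable[ℱ s] (hitSum g J s) :=
  Finset.measurable_sum _ fun r hr =>
    (hP.measurable_comp_ball (hgm r)).mono (ℱ.mono (mem_range.1 hr)) le_rfl

lemma measurable_compensator (hP : IsAllocationProcess μ ℱ Q J) {g : ℕ → Ω → Fin n → ℝ}
    (hgm : ∀ s i, Measurable[ℱ s] fun ω => g s ω i) (s : ℕ) :
    Measurable[ℱ s] (compensator Q g s) :=
  Finset.measurable_sum _ fun r hr => Finset.measurable_sum _ fun i _ =>
    ((hP.measurable_strategy r i).mul (hgm r i)).mono (ℱ.mono (mem_range.1 hr).le) le_rfl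

lemma sum_mul_le_one (hP : IsAllocationProcess μ ℱ Q J) {g : Fin n → ℝ} (hg1 : ∀ i, g i ≤ 1)
    (s : ℕ) (ω : Ω) : ∑ i, Q s ω i * g i ≤ 1 :=
  calc ∑ i, Q s ω i * g i ≤ ∑ i, Q s ω i :=
        sum_le_sum fun i _ => mul_le_of_le_one_right (hP.nonneg s ω i) (hg1 i)
    _ = 1 := hP.sum_eq_one s ω

lemma compensator_le (hP : IsAllocationProcess μ ℱ Q J) {g : ℕ → Ω → Fin n → ℝ}
    (hg1 : ∀ s ω i, g s ω i ≤ 1) (s : ℕ) (ω : Ω) : compensator Q g s ω ≤ s := by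
  simpa [compensator] using
    sum_le_sum fun r (_ : r ∈ range s) => hP.sum_mul_le_one (hg1 r ω) r ω

lemma integrable_exp_compensator_sub_hitSum (hP : IsAllocationProcess μ ℱ Q J)
    [IsFiniteMeasure μ] {g : ℕ → Ω → Fin n → ℝ} (hg0 : ∀ s ω i, 0 ≤ g s ω i)
    (hg1 : ∀ s ω i, g s ω i ≤ 1) (hgm : ∀ s i, Measurable[ℱ s] fun ω => g s ω i) (s : ℕ) :
    Integrable (fun ω => Real.exp (compensator Q g s ω / 2 - hitSum g J s ω)) μ := by
  refine .of_bound ?_ (Real.exp s) (ae_of_all _ fun ω => ?_)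
  · exact (((hP.measurable_compensator hgm s).div_const 2).sub (hP.measurable_hitSum hgm s)
      |>.exp.mono (ℱ.le s) le_rfl).aestronglyMeasurable
  · have hhit : 0 ≤ hitSum g J s ω := sum_nonneg fun r _ => hg0 r ω (J r ω)
    have hcomp := hP.compensator_le hg1 s ω
    rw [Real.norm_of_nonneg (Real.exp_pos _).le, Real.exp_le_exp]
    linarith

lemma integral_exp_compensator_sub_hitSum_succ_le (hP : IsAllocationProcess μ ℱ Q J)
    [IsFiniteMeasure μ] {g : ℕ → Ω → Fin n → ℝ} (hg0 : ∀ s ω i, 0 ≤ g s ω i)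
    (hg1 : ∀ s ω i, g s ω i ≤ 1) (hgm : ∀ s i, Measurable[ℱ s] fun ω => g s ω i) (s : ℕ) :
    ∫ ω, Real.exp (compensator Q g (s + 1) ω / 2 - hitSum g J (s + 1) ω) ∂μ
      ≤ ∫ ω, Real.exp (compensator Q g s ω / 2 - hitSum g J s ω) ∂μ := by
  set E := fun ω => compensator Q g s ω / 2 - hitSum g J s ω
  set c := fun ω => ∑ i, Q s ω i * g s ω i
  set F := fun ω i => Real.exp (E ω + c ω / 2 - g s ω i)
  have hnext : ∀ ω, compensator Q g (s + 1) ω / 2 - hitSum g J (s + 1) ω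
      = E ω + c ω / 2 - g s ω (J s ω) := fun ω => by
    simp only [E, c, compensator, hitSum, sum_range_succ]
    ring
  have hFm : ∀ i, Measurable[ℱ s] fun ω => F ω i := fun i =>
    ((((hP.measurable_compensator hgm s).div_const 2).sub (hP.measurable_hitSum hgm s)).add
      ((Finset.measurable_sum _ fun j _ => (hP.measurable_strategy s j).mul (hgm s j)).div_const
        2) |>.sub (hgm s i)).exp
  have hFC : ∀ ω i, |F ω i| ≤ Real.exp (s + 1) := fun ω i => by
    have hhit : 0 ≤ hitSum g J s ω := sum_nonneg fun r _ => hg0 r ω (J r ω)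
    have hcomp := hP.compensator_le hg1 s ω
    have hc : c ω ≤ 1 := hP.sum_mul_le_one (hg1 s ω) s ω
    rw [abs_of_pos (Real.exp_pos _), Real.exp_le_exp]
    linarith [hg0 s ω i, show E ω ≤ s by simp only [E]; linarith]
  have hstep : ∀ ω, ∑ i, Q s ω i * F ω i ≤ Real.exp (E ω) := fun ω =>
    calc ∑ i, Q s ω i * F ω i = Real.exp (E ω + c ω / 2) * ∑ i, Q s ω i * Real.exp (-g s ω i) := by
          simp only [F, mul_sum, sub_eq_add_neg, Real.exp_add]
          exact sum_congr rfl fun i _ => by ring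
      _ ≤ Real.exp (E ω + c ω / 2) * Real.exp (-c ω / 2) :=
          mul_le_mul_of_nonneg_left (sum_mul_exp_neg_le (hP.nonneg s ω) (hP.sum_eq_one s ω)
            (hg0 s ω) (hg1 s ω)) (Real.exp_pos _).le
      _ = Real.exp (E ω) := by rw [← Real.exp_add]; ring_nf
  calc ∫ ω, Real.exp (compensator Q g (s + 1) ω / 2 - hitSum g J (s + 1) ω) ∂μ
      = ∫ ω, F ω (J s ω) ∂μ := by simp only [hnext, F]
    _ = ∫ ω, ∑ i, Q s ω i * F ω i ∂μ := hP.integral_comp_ball hFm _ hFC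
    _ ≤ ∫ ω, Real.exp (E ω) ∂μ := integral_mono_of_nonneg
        (ae_of_all _ fun ω => sum_nonneg fun i _ => mul_nonneg (hP.nonneg s ω i)
          (Real.exp_pos _).le)
        (hP.integrable_exp_compensator_sub_hitSum hg0 hg1 hgm s) (ae_of_all _ hstep)

lemma integral_exp_compensator_sub_hitSum_le_one (hP : IsAllocationProcess μ ℱ Q J)
    [IsProbabilityMeasure μ] {g : ℕ → Ω → Fin n → ℝ} (hg0 : ∀ s ω i, 0 ≤ g s ω i)
    (hg1 : ∀ s ω i, g s ω i ≤ 1) (hgm : ∀ s i, Measurable[ℱ s] fun ω => g s ω i) (s : ℕ) :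
    ∫ ω, Real.exp (compensator Q g s ω / 2 - hitSum g J s ω) ∂μ ≤ 1 := by
  induction s with
  | zero => simp [compensator, hitSum]
  | succ s ih => exact (hP.integral_exp_compensator_sub_hitSum_succ_le hg0 hg1 hgm s).trans ih

lemma measureReal_hitSum_le (hP : IsAllocationProcess μ ℱ Q J) [IsProbabilityMeasure μ]
    {g : ℕ → Ω → Fin n → ℝ} {c : ℝ} (hc : 0 < c) (hg0 : ∀ s ω i, 0 ≤ g s ω i)
    (hgc : ∀ s ω i, g s ω i ≤ c) (hgm : ∀ s i, Measurable[ℱ s] fun ω => g s ω i) (s : ℕ)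
    (a : ℝ) :
    μ.real {ω | hitSum g J s ω ≤ compensator Q g s ω / 2 - c * a} ≤ Real.exp (-a) := by
  set g' : ℕ → Ω → Fin n → ℝ := fun r ω i => g r ω i / c
  set M := fun ω => Real.exp (compensator Q g' s ω / 2 - hitSum g' J s ω)
  have hsub : {ω | hitSum g J s ω ≤ compensator Q g s ω / 2 - c * a}
      ⊆ {ω | Real.exp a ≤ M ω} := by
    intro ω hω
    have hscale : compensator Q g' s ω / 2 - hitSum g' J s ω
        = (compensator Q g s ω / 2 - hitSum g J s ω) / c := by
      simp only [g', compensator, hitSum, mul_div_assoc', ← sum_div]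
      ring
    simp only [Set.mem_ofPred_eq, M, Real.exp_le_exp, hscale, le_div_iff₀ hc] at hω ⊢
    linarith
  have hg'm : ∀ s i, Measurable[ℱ s] fun ω => g' s ω i := fun s i => (hgm s i).div_const c
  have hg'0 : ∀ s ω i, 0 ≤ g' s ω i := fun s ω i => div_nonneg (hg0 s ω i) hc.le
  have hg'1 : ∀ s ω i, g' s ω i ≤ 1 := fun s ω i => (div_le_one hc).2 (hgc s ω i)
  have hmarkov := (mul_meas_ge_le_integral_of_nonneg (ae_of_all μ fun ω => (Real.exp_pos _).le)
    (hP.integrable_exp_compensator_sub_hitSum hg'0 hg'1 hg'm s) (Real.exp a)).trans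
    (hP.integral_exp_compensator_sub_hitSum_le_one hg'0 hg'1 hg'm s)
  calc μ.real {ω | hitSum g J s ω ≤ compensator Q g s ω / 2 - c * a}
      ≤ μ.real {ω | Real.exp a ≤ M ω} := measureReal_mono hsub
    _ ≤ Real.exp (-a) := by
      rw [Real.exp_neg, ← one_div, le_div_iff₀' (Real.exp_pos a)]
      exact hmarkov

lemma measureReal_iUnion_pool_le (hP : IsAllocationProcess μ ℱ Q J) [IsProbabilityMeasure μ]
    {pool : Finset (Fin n → ℝ)} {c : ℝ} (hc : 0 < c) (hpool0 : ∀ ν ∈ pool, ∀ i, 0 ≤ ν i)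
    (hpoolc : ∀ ν ∈ pool, ∀ i, ν i ≤ c) (t : ℕ) (a : ℝ) :
    μ.real (⋃ ν ∈ pool, ⋃ s ∈ range t, {ω | hitSum (fun _ _ => ν) J s ω
      ≤ compensator Q (fun _ _ => ν) s ω / 2 - c * a}) ≤ pool.card * t * Real.exp (-a) :=
  calc _ ≤ ∑ ν ∈ pool, ∑ s ∈ range t, μ.real {ω | hitSum (fun _ _ => ν) J s ω
        ≤ compensator Q (fun _ _ => ν) s ω / 2 - c * a} :=
        (measureReal_biUnion_finset_le _ _).trans
          (sum_le_sum fun _ _ => measureReal_biUnion_finset_le _ _)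
    _ ≤ ∑ ν ∈ pool, ∑ s ∈ range t, Real.exp (-a) :=
        sum_le_sum fun ν hν => sum_le_sum fun s _ => hP.measureReal_hitSum_le hc
          (fun _ _ => hpool0 ν hν) (fun _ _ => hpoolc ν hν) (fun _ _ => measurable_const) s a
    _ = pool.card * t * Real.exp (-a) := by simp [mul_assoc]

end IsAllocationProcess

end AllocationProcess

section Deterministic

variable {Ω : Type*} {n : ℕ}

lemma hitSum_congr {g g' : ℕ → Ω → Fin n → ℝ} {J : ℕ → Ω → Fin n} {s : ℕ} {ω : Ω}
    (h : ∀ r < s, g r ω = g' r ω) : hitSum g J s ω = hitSum g' J s ω :=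
  sum_congr rfl fun r hr => congrFun (h r (mem_range.1 hr)) _

lemma compensator_congr {Q g g' : ℕ → Ω → Fin n → ℝ} {s : ℕ} {ω : Ω}
    (h : ∀ r < s, g r ω = g' r ω) : compensator Q g s ω = compensator Q g' s ω :=
  sum_congr rfl fun r hr => by rw [h r (mem_range.1 hr)]

lemma lt_collisions {k t : ℕ} {J : ℕ → Ω → Fin n} {Q : ℕ → Ω → Fin n → ℝ} {ω : Ω}
    {L a b : ℝ} (hq0 : ∀ r i, 0 ≤ Q r ω i) (hq1 : ∀ r, ∑ i, Q r ω i = 1)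
    (hqk : ∀ r i, Q r ω i ≤ k / n) (hL : ∀ i, (binLoad J t i ω : ℝ) < L)
    (hpair : ∀ r < t, compensator Q (fun _ _ => Q r ω) r ω / 2 - b
      < hitSum (fun _ _ => Q r ω) J r ω)
    (hcapped : compensator Q (fun r ω i => min (binLoad J r i ω : ℝ) L) t ω / 2 - a
      < hitSum (fun r ω i => min (binLoad J r i ω : ℝ) L) J t ω) :
    ((t : ℝ) ^ 2 - t * k) / (8 * n) - t * b / 2 - a < collisions J t ω := by
  have hn : (0 : ℝ) < n := by
    rcases Nat.eq_zero_or_pos n with rfl | hn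
    · simpa using hq1 0
    · exact_mod_cast hn
  have huncap : ∀ r < t, (fun i => min (binLoad J r i ω : ℝ) L) = fun i => (binLoad J r i ω : ℝ) :=
    fun r hr => funext fun i =>
      min_eq_left ((Nat.cast_le.2 (binLoad_mono J hr.le i ω)).trans (hL i).le)
  rw [hitSum_congr (g' := fun r ω i => (binLoad J r i ω : ℝ)) huncap,
    compensator_congr (g' := fun r ω i => (binLoad J r i ω : ℝ)) huncap] at hcapped
  set P := ∑ r ∈ range t, ∑ p ∈ range r, ∑ i, Q p ω i * Q r ω i
  have hcs := sq_le_sum_pairwise_overlap (fun r => Q r ω) hq0 hq1 hqk t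
  have hcoll : (collisions J t ω : ℝ) = hitSum (fun r ω i => binLoad J r i ω) J t ω := by
    simp [collisions_eq_sum_binLoad, hitSum]
  have hcomp : P / 2 - t * b ≤ compensator Q (fun r ω i => binLoad J r i ω) t ω := by
    calc P / 2 - t * b = ∑ r ∈ range t, (compensator Q (fun _ _ => Q r ω) r ω / 2 - b) := by
          simp [P, compensator, sum_sub_distrib, sum_div]
      _ ≤ ∑ r ∈ range t, hitSum (fun _ _ => Q r ω) J r ω :=
          sum_le_sum fun r hr => (hpair r (mem_range.1 hr)).le
      _ = compensator Q (fun r ω i => binLoad J r i ω) t ω := by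
          simp only [hitSum, compensator, sum_range_comp_eq_sum_binLoad_mul]
          exact sum_congr rfl fun r _ => sum_congr rfl fun i _ => mul_comm _ _
  have hP : ((t : ℝ) ^ 2 - t * k) / (8 * n) ≤ P / 4 := by
    rw [div_le_iff₀ (by positivity)]
    nlinarith
  linarith

lemma collision_threshold_le {n k m t : ℕ} {L : ℝ} (hn : 0 < n) (hm : 1 ≤ m) (hL : 0 ≤ L)
    (ht : max (500 * k * m : ℝ) (30 * √(L * n * Real.log n)) ≤ t) :
    (t : ℝ) ^ 2 / (16 * n) ≤ ((t : ℝ) ^ 2 - t * k) / (8 * n) - t * (k / n * (6 * m)) / 2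
      - L * Real.log (n ^ 4) := by
  rw [Real.log_pow, Nat.cast_ofNat]
  have hnR : (0 : ℝ) < n := by exact_mod_cast hn
  have hmR : (1 : ℝ) ≤ m := by exact_mod_cast hm
  have htkm : 500 * k * m ≤ (t : ℝ) := (le_max_left _ _).trans ht
  have hsq : 900 * (L * n * Real.log n) ≤ (t : ℝ) ^ 2 := by
    have h30 := (le_max_right _ _).trans ht
    have := Real.sq_sqrt (by positivity : 0 ≤ L * n * Real.log n)
    nlinarith [Real.sqrt_nonneg (L * n * Real.log n)]
  have hk : (t : ℝ) * k ≤ t * k * m := le_mul_of_one_le_right (by positivity) hmR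
  have htkm' : (t : ℝ) * (k * m) ≤ t ^ 2 / 500 := by nlinarith [(Nat.cast_nonneg t : (0:ℝ) ≤ t)]
  have hgap : ((t : ℝ) ^ 2 - t * k) / (8 * n) - t * (k / n * (6 * m)) / 2 - L * (4 * Real.log n)
      - (t : ℝ) ^ 2 / (16 * n)
      = ((t : ℝ) ^ 2 / 16 - t * k / 8 - 3 * (t * (k * m)) - 4 * (L * n * Real.log n)) / n := by
    field_simp
    ring
  have := div_nonneg (by nlinarith : (0 : ℝ) ≤ (t : ℝ) ^ 2 / 16 - t * k / 8 - 3 * (t * (k * m))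
    - 4 * (L * n * Real.log n)) hnR.le
  linarith

end Deterministic

lemma one_le_of_sum_eq_one_of_le_div {n k : ℕ} {ν : Fin n → ℝ} (h1 : ∑ i, ν i = 1)
    (hk : ∀ i, ν i ≤ k / n) : 1 ≤ (k : ℝ) :=
  calc 1 = ∑ i, ν i := h1.symm
    _ ≤ ∑ _i : Fin n, (k / n : ℝ) := sum_le_sum fun i _ => hk i
    _ ≤ k := by
        rcases Nat.eq_zero_or_pos n with rfl | hn
        · simp at h1
        · simp [mul_div_cancel₀ _ (by positivity : (n : ℝ) ≠ 0)]

lemma card_mul_mul_exp_le {n m p t : ℕ} (hp : p ≤ 2 ^ m) (ht : t ≤ n) (hn : 0 < n)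
    (hm : Real.log n ≤ m) : p * t * Real.exp (-(6 * m)) ≤ Real.exp (-Real.log (n ^ 4)) := by
  have h2 : (2 : ℝ) ^ m ≤ Real.exp m := by
    rw [← Real.exp_one_pow]
    exact pow_le_pow_left₀ two_pos.le (by linarith [Real.add_one_le_exp 1]) m
  have hn' : (n : ℝ) ≤ Real.exp m := by
    rw [← Real.exp_log (by exact_mod_cast hn : (0 : ℝ) < n)]
    exact Real.exp_le_exp.2 hm
  calc p * t * Real.exp (-(6 * m)) ≤ Real.exp m * Real.exp m * Real.exp (-(6 * m)) := by
        gcongr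
        · exact le_trans (by exact_mod_cast hp) h2
        · exact le_trans (by exact_mod_cast ht) hn'
    _ = Real.exp (-(4 * m)) := by rw [← Real.exp_add, ← Real.exp_add]; ring_nf
    _ ≤ Real.exp (-Real.log (n ^ 4)) := by
        rw [Real.exp_le_exp, Real.log_pow, Nat.cast_ofNat]
        linarith

/-- Part (ii) of Theorem 3.1 of the paper: in the relaxed adaptive allocation model with
`n` balls and `n` bins, pool of at most `2^m` strategies (each with point masses at most
`k/n`) and `m ≥ log n`, there is an absolute constant `A > 0` such that for all
sufficiently large `n`, every `L ≥ 1` and every time `t ≤ n` with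
`t ≥ max (500 k m) (30 √(L n log n))`, the probability that simultaneously
`Col₂(t) < t²/(16n)` and the maximal load is below `L` is at most `A n⁻⁴`. -/
theorem collisions_or_load_whp :
    ∃ A : ℝ, 0 < A ∧ ∃ n₀ : ℕ, ∀ n : ℕ, n₀ ≤ n → ∀ k m : ℕ, Real.log n ≤ m →
    ∀ (Ω : Type) (_ : MeasurableSpace Ω) (μ : Measure Ω), IsProbabilityMeasure μ →
    ∀ (ℱ : Filtration ℕ ‹MeasurableSpace Ω›)
      (pool : Finset (Fin n → ℝ)), pool.card ≤ 2 ^ m →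
      (∀ ν ∈ pool, ∀ i, 0 ≤ ν i) →
      (∀ ν ∈ pool, ∑ i, ν i = 1) →
      (∀ ν ∈ pool, ∀ i, ν i ≤ (k : ℝ) / n) →
    ∀ (Q : ℕ → Ω → Fin n → ℝ) (J : ℕ → Ω → Fin n),
      (∀ t ω, Q t ω ∈ pool) →
      (∀ t i, Measurable[ℱ t] fun ω => Q t ω i) →
      (∀ t, Measurable[ℱ (t + 1)] (J t)) →
      (∀ t i, (μ[(fun ω => if J t ω = i then (1 : ℝ) else 0) | ℱ t])
          =ᵐ[μ] fun ω => Q t ω i) →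
    ∀ L : ℝ, 1 ≤ L → ∀ t : ℕ, t ≤ n →
      max (500 * k * m : ℝ) (30 * Real.sqrt (L * n * Real.log n)) ≤ t →
      (μ {ω | (collisions J t ω : ℝ) < (t : ℝ) ^ 2 / (16 * n) ∧
          ∀ i, (binLoad J t i ω : ℝ) < L}).toReal ≤ A / (n : ℝ) ^ 4 := by
  refine ⟨2, two_pos, 2, fun n hn k m hm Ω _ μ _ ℱ pool hcard hp0 hp1 hpk Q J hQ hQm hJm hcond
    L hL t htn ht => ?_⟩
  have hP : IsAllocationProcess μ ℱ Q J :=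
    ⟨fun t ω => hp0 _ (hQ t ω), fun t ω => hp1 _ (hQ t ω), hQm, hJm, hcond⟩
  have hn0 : 0 < n := by omega
  have hm0 : 0 < m := by exact_mod_cast (Real.log_pos (by exact_mod_cast hn)).trans_le hm
  obtain ⟨ω₀⟩ := nonempty_of_isProbabilityMeasure μ
  have hk : 1 ≤ (k : ℝ) := one_le_of_sum_eq_one_of_le_div (hp1 _ (hQ 0 ω₀)) (hpk _ (hQ 0 ω₀))
  set N : ℕ → Ω → Fin n → ℝ := fun r ω i => min (binLoad J r i ω : ℝ) L
  set bad₁ := ⋃ ν ∈ pool, ⋃ s ∈ range t, {ω | hitSum (fun _ _ => ν) J s ω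
    ≤ compensator Q (fun _ _ => ν) s ω / 2 - k / n * (6 * m)}
  set bad₂ := {ω | hitSum N J t ω ≤ compensator Q N t ω / 2 - L * Real.log (n ^ 4)}
  have hbad₁ : μ.real bad₁ ≤ Real.exp (-Real.log (n ^ 4)) :=
    (hP.measureReal_iUnion_pool_le (by positivity) hp0 hpk t _).trans
      (card_mul_mul_exp_le hcard htn hn0 hm)
  have hbad₂ : μ.real bad₂ ≤ Real.exp (-Real.log (n ^ 4)) :=
    hP.measureReal_hitSum_le (by positivity) (fun _ _ _ => le_min (by positivity) (by linarith))
      (fun _ _ _ => min_le_right _ _) (fun r i => (hP.measurable_binLoad r i).min measurable_const)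
      t _
  have hsub : {ω | (collisions J t ω : ℝ) < (t : ℝ) ^ 2 / (16 * n) ∧
      ∀ i, (binLoad J t i ω : ℝ) < L} ⊆ bad₁ ∪ bad₂ := by
    rintro ω ⟨hcol, hload⟩
    by_contra hgood
    simp only [bad₁, bad₂, Set.mem_union, Set.mem_iUnion, Set.mem_ofPred_eq, mem_range, not_or,
      not_exists, not_le] at hgood
    exact hcol.not_ge ((collision_threshold_le hn0 hm0 (by linarith) ht).trans
      (lt_collisions (hP.nonneg · ω) (hP.sum_eq_one · ω) (fun r => hpk _ (hQ r ω)) hload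
        (fun r hr => hgood.1 _ (hQ r ω) r hr) hgood.2).le)
  rw [Real.exp_neg, Real.exp_log (by positivity)] at hbad₁ hbad₂
  calc μ.real _ ≤ μ.real bad₁ + μ.real bad₂ :=
        (measureReal_mono hsub).trans (measureReal_union_le _ _)
    _ ≤ 2 / n ^ 4 := by linarith [show (2 : ℝ) / n ^ 4 = ((n : ℝ) ^ 4)⁻¹ + ((n : ℝ) ^ 4)⁻¹ by ring]
end

section
/- There is an absolute constant A > 0 such that the following holds for all sufficiently large n. Consider the relaxed adaptive allocation model with n balls and n bins, pool size at most 2^m with m ≥ log n, and all pool distributions having point masses at most k/n. Let ℓ be a positive integer satisfying 30·(20ℓ)^{2^ℓ − 1} ≤ min( √(n/(k·m)), √(n/(ℓ·log n)) ). Then with probability at least 1 − A·ℓ·n^{−4}, the maximal load after n rounds is at least ℓ. In particular, for any fixed ε ∈ (0,1), if n/(k·m) → ∞, then with high probability the maximal load is at least (1−ε)·log₂ log(n/(k·m)). -/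
open MeasureTheory Finset

/-!
Suppose every bin has load `< ℓ` after `n` rounds. For a strategy `ν` of the pool and a level
`c`, the `ν`-mass of the bins of load `> c` is a sum of `[0, k/n]`-valued increments, so an
exponential supermartingale shows that it is at least half its predictable compensator minus
`6 m k / n`, except with probability `e^{-6m}`; the union over the `2^m` strategies, `ℓ` levels and
`n` times costs `ℓ n⁻⁴`. On the remaining event, the masses `a j` of the bins of load `≥ j`
accumulated by the strategies actually played and the collision sums `S j` satisfy
`S j ≤ 2 a (j+1) + S (j+1) + 12 k m`, and Cauchy–Schwarz over the bins gives
`a j ^ 2 ≤ k a j + 2 n S j`. A downward induction from `a ℓ = S ℓ = 0` then forces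
`a j ≤ (n / 2) (20 ℓ)^{-(2^j - 1)}`, which contradicts `a 0 = n`.
-/

open Real

namespace AdaptiveAllocation

section Loads

variable {Ω : Type*} {n : ℕ} (J : ℕ → Ω → Fin n)

lemma binLoad_succ (t : ℕ) (i : Fin n) (ω : Ω) :
    binLoad J (t + 1) i ω = binLoad J t i ω + if J t ω = i then 1 else 0 := by
  unfold binLoad
  rw [range_add_one, filter_insert]
  split
  · rw [card_insert_of_notMem (by simp)]
  · rfl

lemma binLoad_mono (i : Fin n) (ω : Ω) : Monotone fun t => binLoad J t i ω :=
  fun _ _ h => card_le_card (filter_subset_filter _ (range_subset_range.2 h))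

def loadGe (j t : ℕ) (i : Fin n) (ω : Ω) : ℝ := if j ≤ binLoad J t i ω then 1 else 0

def loadEq (c t : ℕ) (i : Fin n) (ω : Ω) : ℝ := if binLoad J t i ω = c then 1 else 0

variable {J}

lemma loadGe_nonneg {j t : ℕ} {i : Fin n} {ω : Ω} : 0 ≤ loadGe J j t i ω := by
  unfold loadGe; split <;> norm_num

lemma loadGe_le_one {j t : ℕ} {i : Fin n} {ω : Ω} : loadGe J j t i ω ≤ 1 := by
  unfold loadGe; split <;> norm_num

lemma loadEq_nonneg {c t : ℕ} {i : Fin n} {ω : Ω} : 0 ≤ loadEq J c t i ω := by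
  unfold loadEq; split <;> norm_num

lemma loadEq_le_one {c t : ℕ} {i : Fin n} {ω : Ω} : loadEq J c t i ω ≤ 1 := by
  unfold loadEq; split <;> norm_num

lemma loadGe_zero (t : ℕ) (i : Fin n) (ω : Ω) : loadGe J 0 t i ω = 1 := by
  simp [loadGe]

lemma loadGe_sub_loadGe_succ (c t : ℕ) (i : Fin n) (ω : Ω) :
    loadGe J c t i ω - loadGe J (c + 1) t i ω = loadEq J c t i ω := by
  unfold loadGe loadEq
  split_ifs <;> first | omega | norm_num

lemma loadGe_succ_succ (c t : ℕ) (i : Fin n) (ω : Ω) :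
    loadGe J (c + 1) (t + 1) i ω
      = loadGe J (c + 1) t i ω + if J t ω = i then loadEq J c t i ω else 0 := by
  simp only [loadGe, loadEq, binLoad_succ]
  split_ifs <;> first | omega | norm_num

lemma loadGe_eq_zero_of_binLoad_lt {ℓ N t : ℕ} {ω : Ω} (hload : ∀ i, binLoad J N i ω < ℓ)
    (ht : t ≤ N) (i : Fin n) : loadGe J ℓ t i ω = 0 :=
  if_neg (not_le.2 ((binLoad_mono J i ω ht).trans_lt (hload i)))

variable (J)

def heavyMass (ν : Fin n → ℝ) (j t : ℕ) (ω : Ω) : ℝ := ∑ i, ν i * loadGe J j t i ω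

def levelMass (ν : Fin n → ℝ) (c t : ℕ) (ω : Ω) : ℝ := ∑ i, ν i * loadEq J c t i ω

/-- The predictable compensator of `t ↦ heavyMass J ν (c + 1) t` under the strategies `Q`. -/
def compensator (Q : ℕ → Ω → Fin n → ℝ) (ν : Fin n → ℝ) (c T : ℕ) (ω : Ω) : ℝ :=
  ∑ r ∈ range T, levelMass J (Q r ω * ν) c r ω

lemma heavyMass_sub_heavyMass_succ (ν : Fin n → ℝ) (c t : ℕ) (ω : Ω) :
    heavyMass J ν c t ω - heavyMass J ν (c + 1) t ω = levelMass J ν c t ω := by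
  simp only [heavyMass, levelMass, ← sum_sub_distrib, ← mul_sub, loadGe_sub_loadGe_succ]

/-- A bin reaches load `c + 1` exactly when a ball lands in it while its load is `c`. -/
lemma heavyMass_succ_eq_sum (ν : Fin n → ℝ) (c T : ℕ) (ω : Ω) :
    heavyMass J ν (c + 1) T ω = ∑ s ∈ range T, ν (J s ω) * loadEq J c s (J s ω) ω := by
  induction T with
  | zero => simp [heavyMass, loadGe, binLoad]
  | succ T ih =>
    simp only [sum_range_succ, ← ih, heavyMass, loadGe_succ_succ, mul_add, sum_add_distrib,
      mul_ite, mul_zero, sum_ite_eq, mem_univ, if_true]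

end Loads

section Collisions

variable {Ω : Type*} {n : ℕ} {Q : ℕ → Ω → Fin n → ℝ} {J : ℕ → Ω → Fin n} {ω : Ω}

variable (Q J) in
def cumHeavyMass (N j : ℕ) (ω : Ω) : ℝ := ∑ s ∈ range N, heavyMass J (Q s ω) j s ω

variable (Q J) in
def collisionSum (N j : ℕ) (ω : Ω) : ℝ :=
  ∑ s ∈ range N, ∑ r ∈ range s, heavyMass J (Q r ω * Q s ω) j r ω

lemma cumHeavyMass_nonneg (hQ0 : ∀ s i, 0 ≤ Q s ω i) (N j : ℕ) : 0 ≤ cumHeavyMass Q J N j ω :=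
  sum_nonneg fun s _ => sum_nonneg fun i _ => mul_nonneg (hQ0 s i) loadGe_nonneg

lemma cumHeavyMass_zero (hQ1 : ∀ s, ∑ i, Q s ω i = 1) (N : ℕ) : cumHeavyMass Q J N 0 ω = N := by
  simp [cumHeavyMass, heavyMass, loadGe_zero, hQ1]

lemma cumHeavyMass_eq_zero_of_binLoad_lt {ℓ N : ℕ} (hload : ∀ i, binLoad J N i ω < ℓ) :
    cumHeavyMass Q J N ℓ ω = 0 :=
  sum_eq_zero fun s hs => sum_eq_zero fun i _ => by
    rw [loadGe_eq_zero_of_binLoad_lt hload (mem_range.1 hs).le, mul_zero]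

lemma collisionSum_eq_zero_of_binLoad_lt {ℓ N : ℕ} (hload : ∀ i, binLoad J N i ω < ℓ) :
    collisionSum Q J N ℓ ω = 0 :=
  sum_eq_zero fun s hs => sum_eq_zero fun r hr => sum_eq_zero fun i _ => by
    rw [loadGe_eq_zero_of_binLoad_lt hload
      ((mem_range.1 hr).trans (mem_range.1 hs)).le, mul_zero]

lemma sum_compensator_eq (N c : ℕ) :
    ∑ s ∈ range N, compensator J Q (Q s ω) c s ω
      = collisionSum Q J N c ω - collisionSum Q J N (c + 1) ω := by
  simp only [collisionSum, compensator, ← sum_sub_distrib, heavyMass_sub_heavyMass_succ]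

lemma collisionSum_le_of_compensator_le {N c : ℕ} {ε : ℝ}
    (hgood : ∀ s < N, compensator J Q (Q s ω) c s ω / 2 - ε ≤ heavyMass J (Q s ω) (c + 1) s ω) :
    collisionSum Q J N c ω
      ≤ 2 * cumHeavyMass Q J N (c + 1) ω + collisionSum Q J N (c + 1) ω + 2 * N * ε := by
  have hsum := sum_le_sum fun s hs => hgood s (mem_range.1 hs)
  rw [sum_sub_distrib, ← sum_div, sum_compensator_eq, sum_const, card_range, nsmul_eq_mul]
    at hsum
  unfold cumHeavyMass
  linarith

lemma sq_sum_range_eq (f : ℕ → ℝ) (N : ℕ) :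
    (∑ s ∈ range N, f s) ^ 2
      = ∑ s ∈ range N, f s ^ 2 + 2 * ∑ s ∈ range N, ∑ r ∈ range s, f r * f s := by
  induction N with
  | zero => simp
  | succ N ih =>
    simp only [sum_range_succ, add_sq, ih, ← sum_mul]
    ring

/-- Cauchy–Schwarz over the bins, then each square splits into a diagonal part, bounded through
`Q ≤ b`, and an off-diagonal part, bounded by the collision sum. -/
lemma sq_cumHeavyMass_le {b : ℝ} (hQ0 : ∀ s i, 0 ≤ Q s ω i) (hQb : ∀ s i, Q s ω i ≤ b)
    (N j : ℕ) :
    cumHeavyMass Q J N j ω ^ 2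
      ≤ n * b * cumHeavyMass Q J N j ω + 2 * n * collisionSum Q J N j ω := by
  set v : ℕ → Fin n → ℝ := fun s i => Q s ω i * loadGe J j s i ω
  have hv0 : ∀ s i, 0 ≤ v s i := fun s i => mul_nonneg (hQ0 s i) loadGe_nonneg
  have hvQ : ∀ s i, v s i ≤ Q s ω i := fun s i =>
    mul_le_of_le_one_right (hQ0 s i) loadGe_le_one
  have hcum : cumHeavyMass Q J N j ω = ∑ i, ∑ s ∈ range N, v s i := sum_comm
  have hdiag : ∑ i, ∑ s ∈ range N, v s i ^ 2 ≤ b * cumHeavyMass Q J N j ω := by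
    rw [hcum, mul_sum]
    refine sum_le_sum fun i _ => ?_
    rw [mul_sum]
    refine sum_le_sum fun s _ => ?_
    rw [sq, mul_comm b]
    exact mul_le_mul_of_nonneg_left ((hvQ s i).trans (hQb s i)) (hv0 s i)
  have hoff : ∑ i, ∑ s ∈ range N, ∑ r ∈ range s, v r i * v s i ≤ collisionSum Q J N j ω := by
    simp only [collisionSum, heavyMass, Pi.mul_apply]
    rw [sum_comm]
    gcongr with s _
    rw [sum_comm]
    refine sum_le_sum fun r _ => sum_le_sum fun i _ => ?_
    exact (mul_le_mul_of_nonneg_left (hvQ s i) (hv0 r i)).trans_eq (by simp only [v]; ring)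
  calc cumHeavyMass Q J N j ω ^ 2 ≤ n * ∑ i, (∑ s ∈ range N, v s i) ^ 2 := by
        simpa [hcum] using
          sq_sum_le_card_mul_sum_sq (s := univ) (f := fun i => ∑ s ∈ range N, v s i)
    _ = n * (∑ i, ∑ s ∈ range N, v s i ^ 2
          + 2 * ∑ i, ∑ s ∈ range N, ∑ r ∈ range s, v r i * v s i) := by
        simp only [sq_sum_range_eq, sum_add_distrib, mul_sum]
    _ ≤ n * (b * cumHeavyMass Q J N j ω + 2 * collisionSum Q J N j ω) := by
        gcongr
    _ = _ := by ring

end Collisions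

section Recursion

/-- The solution of `h (j + 1) = h j ^ 2 / (10 n L)` with `h 0 = n / 2`. -/
noncomputable def threshold (n L : ℝ) (j : ℕ) : ℝ := n / 2 / (20 * L) ^ (2 ^ j - 1)

variable {n L : ℝ}

lemma threshold_zero : threshold n L 0 = n / 2 := by simp [threshold]

lemma threshold_pos (hn : 0 < n) (hL : 0 < L) (j : ℕ) : 0 < threshold n L j := by
  unfold threshold; positivity

lemma threshold_succ (j : ℕ) :
    threshold n L (j + 1) = threshold n L j / (20 * L) ^ 2 ^ j := by
  have : 2 ^ (j + 1) - 1 = (2 ^ j - 1) + 2 ^ j := by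
    have := j.one_le_two_pow; rw [pow_succ]; omega
  rw [threshold, threshold, this, pow_add]
  ring

lemma threshold_sq (hL : L ≠ 0) (j : ℕ) :
    threshold n L j ^ 2 = 10 * n * L * threshold n L (j + 1) := by
  have h20 : (20 * L) ^ 2 ^ j = (20 * L) ^ (2 ^ j - 1) * (20 * L) := by
    rw [← pow_succ, Nat.sub_add_cancel j.one_le_two_pow]
  have hX : (20 * L) ^ (2 ^ j - 1) ≠ 0 := pow_ne_zero _ (by positivity)
  rw [threshold_succ, h20, threshold]
  field_simp
  ring

lemma twenty_mul_threshold_succ_le (hn : 0 ≤ n) (hL : 1 ≤ L) (j : ℕ) :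
    20 * threshold n L (j + 1) ≤ threshold n L j := by
  have h20 : 20 ≤ (20 * L) ^ 2 ^ j :=
    (by linarith : (20 : ℝ) ≤ 20 * L).trans (le_self_pow₀ (by linarith) (by positivity))
  have hnn : 0 ≤ threshold n L j := div_nonneg (by positivity) (pow_nonneg (by linarith) _)
  rw [threshold_succ, mul_div_assoc', div_le_iff₀ (by linarith)]
  rw [mul_comm 20]
  exact mul_le_mul_of_nonneg_left h20 hnn

lemma threshold_antitone (hn : 0 ≤ n) (hL : 1 ≤ L) : Antitone (threshold n L) :=
  antitone_nat_of_succ_le fun j => by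
    have := twenty_mul_threshold_succ_le hn hL j
    have : 0 ≤ threshold n L (j + 1) :=
      div_nonneg (by positivity) (pow_nonneg (by linarith) _)
    linarith

lemma mul_le_threshold {K : ℝ} {ℓ : ℕ} (hℓ : 1 ≤ ℓ) (hK : 0 ≤ K)
    (hnK : (30 * (20 * (ℓ : ℝ)) ^ (2 ^ ℓ - 1)) ^ 2 * K ≤ n) :
    9000 * K ≤ threshold n ℓ ℓ := by
  set P := (20 * (ℓ : ℝ)) ^ (2 ^ ℓ - 1)
  have hL : (1 : ℝ) ≤ ℓ := by exact_mod_cast hℓ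
  have hP : 20 ≤ P := by
    have : 2 ^ ℓ - 1 ≠ 0 := by have := Nat.one_lt_two_pow (n := ℓ) (by omega); omega
    exact (by linarith : (20 : ℝ) ≤ 20 * ℓ).trans (le_self_pow₀ (by linarith) this)
  rw [threshold, div_div, le_div_iff₀ (by positivity)]
  nlinarith [mul_nonneg hK (by linarith : (0 : ℝ) ≤ P - 20)]

/-- Once `a ≥ 9000 K`, the term `k a` is negligible and `a ^ 2 ≲ 2 n S ≲ 6 n H < h ^ 2`. -/
lemma le_of_sq_le_mul_add {a h H S k K : ℝ} (ha : 0 ≤ a) (hh : 0 ≤ h)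
    (hCS : a ^ 2 ≤ k * a + 2 * n * S) (hS : S ≤ 3 * H + 12 * L * K) (hkK : k ≤ K)
    (hKH : 9000 * K ≤ H) (hHh : H ≤ h) (hsq : h ^ 2 = 10 * n * L * H) (hn : 0 ≤ n)
    (hL : 1 ≤ L) : a ≤ h := by
  by_contra! hlt
  have hka : k * a ≤ a ^ 2 / 9000 := by nlinarith
  have hnH : 0 ≤ n * H := by nlinarith [sq_nonneg h]
  have hnS : 2 * n * S ≤ n * H * (6 + 24 * L / 9000) := by
    nlinarith [mul_nonneg hn (by linarith : (0 : ℝ) ≤ L)]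
  nlinarith

/-- Downward induction on the level `j`: every `a j` stays below `threshold n ℓ j`, which is
absurd at `j = 0` where `a 0 = n > n / 2`. -/
theorem false_of_collision_recursion {k K : ℝ} {ℓ : ℕ} {a S : ℕ → ℝ} (hn : 0 < n)
    (hℓ : 1 ≤ ℓ) (hK : 0 ≤ K) (hkK : k ≤ K)
    (hnK : (30 * (20 * (ℓ : ℝ)) ^ (2 ^ ℓ - 1)) ^ 2 * K ≤ n)
    (ha : ∀ j, 0 ≤ a j) (ha0 : a 0 = n) (haℓ : a ℓ = 0) (hSℓ : S ℓ = 0)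
    (hS : ∀ j < ℓ, S j ≤ 2 * a (j + 1) + S (j + 1) + 12 * K)
    (hCS : ∀ j, a j ^ 2 ≤ k * a j + 2 * n * S j) : False := by
  set h := threshold n ℓ
  have hL : (1 : ℝ) ≤ ℓ := by exact_mod_cast hℓ
  have hpos : ∀ j, 0 < h j := threshold_pos hn (by linarith)
  have hanti : Antitone h := threshold_antitone hn.le hL
  have hhℓ : 9000 * K ≤ h ℓ := mul_le_threshold hℓ hK hnK
  have key : ∀ j ≤ ℓ, a j ≤ h j ∧ S j ≤ 3 * h (j + 1) + 12 * (ℓ - j) * K := by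
    intro j hj
    induction hj using Nat.decreasingInduction with
    | self => simp [haℓ, hSℓ, (hpos _).le]
    | of_succ j hj ih =>
      have hSj : S j ≤ 3 * h (j + 1) + 12 * (ℓ - j) * K := by
        have := hS j hj
        have := twenty_mul_threshold_succ_le hn.le hL (j + 1)
        have := hpos (j + 2)
        push_cast at ih
        linarith [ih.1, ih.2]
      have hSℓ' : S j ≤ 3 * h (j + 1) + 12 * ℓ * K := by
        have : (0 : ℝ) ≤ j * K := by positivity
        linarith
      exact ⟨le_of_sq_le_mul_add (ha j) (hpos j).le (hCS j) hSℓ' hkK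
        (hhℓ.trans (hanti hj)) (hanti j.le_succ) (threshold_sq (by linarith) j) hn.le hL, hSj⟩
  have h0 : h 0 = n / 2 := threshold_zero
  linarith [(key 0 ℓ.zero_le).1]

end Recursion

section Pathwise

variable {Ω : Type*} {n : ℕ}

theorem exists_heavyMass_lt_of_binLoad_lt {Q : ℕ → Ω → Fin n → ℝ} {J : ℕ → Ω → Fin n} {ω : Ω}
    {a b : ℝ} {ℓ : ℕ} (hQ0 : ∀ s i, 0 ≤ Q s ω i) (hQ1 : ∀ s, ∑ i, Q s ω i = 1)
    (hQb : ∀ s i, Q s ω i ≤ b) (hℓ : 1 ≤ ℓ) (ha : 6 ≤ a)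
    (hab : (30 * (20 * (ℓ : ℝ)) ^ (2 ^ ℓ - 1)) ^ 2 * (a * b) ≤ 6)
    (hload : ∀ i, binLoad J n i ω < ℓ) :
    ∃ s < n, ∃ c < ℓ,
      heavyMass J (Q s ω) (c + 1) s ω < compensator J Q (Q s ω) c s ω / 2 - a * b := by
  by_contra! hgood
  have hn : 0 < n := Nat.pos_of_ne_zero fun h => by subst h; simpa using hQ1 0
  have hb : 0 ≤ b := (hQ0 0 ⟨0, hn⟩).trans (hQb 0 _)
  have hnR : (0 : ℝ) < n := by exact_mod_cast hn
  have hnb : 0 ≤ n * b * (a - 6) := mul_nonneg (by positivity) (by linarith)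
  refine false_of_collision_recursion (k := n * b) (K := n * (a * b) / 6)
    (a := fun j => cumHeavyMass Q J n j ω) (S := fun j => collisionSum Q J n j ω) hnR hℓ
    (by nlinarith) (by nlinarith) (by nlinarith) (cumHeavyMass_nonneg hQ0 n)
    (cumHeavyMass_zero hQ1 n) (cumHeavyMass_eq_zero_of_binLoad_lt hload)
    (collisionSum_eq_zero_of_binLoad_lt hload) (fun j hj => ?_)
    (fun j => sq_cumHeavyMass_le hQ0 hQb n j)
  have := collisionSum_le_of_compensator_le (fun s hs => hgood s hs j hj)
  linarith

end Pathwise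

lemma exp_neg_le_one_sub_half {x : ℝ} (hx0 : 0 ≤ x) (hx1 : x ≤ 1) : exp (-x) ≤ 1 - x / 2 := by
  have h1 := add_one_le_exp x
  have h2 : exp (-x) * exp x = 1 := by rw [← exp_add, neg_add_cancel, exp_zero]
  nlinarith [exp_pos (-x), mul_nonneg (exp_pos (-x)).le (sub_nonneg.2 hx1)]

lemma exp_mul_one_sub_le_one (y : ℝ) : exp y * (1 - y) ≤ 1 := by
  simpa [← exp_add] using mul_le_mul_of_nonneg_left (one_sub_le_exp_neg y) (exp_pos y).le

section CondExp

variable {Ω : Type*} {m m0 : MeasurableSpace Ω} {μ : Measure Ω} [IsFiniteMeasure μ] {n : ℕ}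

lemma integral_mul_eq_of_condExp_ae_eq (hm : m ≤ m0) {f g H : Ω → ℝ}
    (hH : StronglyMeasurable[m] H) {C : ℝ} (hHC : ∀ ω, ‖H ω‖ ≤ C) (hf : Integrable f μ)
    (hfg : μ[f | m] =ᵐ[μ] g) : ∫ ω, H ω * f ω ∂μ = ∫ ω, H ω * g ω ∂μ :=
  calc ∫ ω, H ω * f ω ∂μ = ∫ ω, μ[H * f | m] ω ∂μ := (integral_condExp hm).symm
    _ = ∫ ω, H ω * g ω ∂μ := integral_congr_ae <|
      (condExp_stronglyMeasurable_mul_of_bound hm hH hf C (ae_of_all _ hHC)).trans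
        (hfg.mono fun ω hω => by simp [hω])

lemma condExp_one_sub_div_two_ae_eq (hm : m ≤ m0) {f g : Ω → ℝ} (hf : Integrable f μ)
    (hfg : μ[f | m] =ᵐ[μ] g) : μ[fun ω => 1 - f ω / 2 | m] =ᵐ[μ] fun ω => 1 - g ω / 2 := by
  have hfun : (fun ω => 1 - f ω / 2) = (fun _ => (1 : ℝ)) - (2 : ℝ)⁻¹ • f := by
    ext ω; simp [div_eq_inv_mul]
  rw [hfun]
  filter_upwards [condExp_sub (integrable_const (1 : ℝ)) (hf.smul (2 : ℝ)⁻¹) m,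
    condExp_smul (μ := μ) (2 : ℝ)⁻¹ f m, hfg] with ω h1 h2 h3
  simp [h1, h2, h3, condExp_const hm, div_eq_inv_mul]

lemma apply_eq_sum_mul_ite (f : Fin n → ℝ) (j : Fin n) :
    f j = ∑ i, f i * if j = i then 1 else 0 := by
  simp

lemma measurable_apply {f : Ω → Fin n → ℝ} {K : Ω → Fin n}
    (hf : ∀ i, Measurable[m] fun ω => f ω i) (hK : Measurable[m] K) :
    Measurable[m] fun ω => f ω (K ω) := by
  simp_rw [apply_eq_sum_mul_ite (f _) (K _)]
  exact Finset.measurable_sum _ fun i _ =>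
    (hf i).mul (Measurable.ite (hK (measurableSet_singleton i)) measurable_const measurable_const)

lemma condExp_apply_ae_eq (hm : m ≤ m0) {K : Ω → Fin n}
    (hK : Measurable K) {q : Ω → Fin n → ℝ}
    (hq : ∀ i, μ[fun ω => if K ω = i then (1 : ℝ) else 0 | m] =ᵐ[μ] fun ω => q ω i)
    {f : Ω → Fin n → ℝ} (hf : ∀ i, StronglyMeasurable[m] fun ω => f ω i) {C : ℝ}
    (hC : ∀ ω i, ‖f ω i‖ ≤ C) :
    μ[fun ω => f ω (K ω) | m] =ᵐ[μ] fun ω => ∑ i, q ω i * f ω i := by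
  set ind : Fin n → Ω → ℝ := fun i ω => if K ω = i then 1 else 0
  have hind : ∀ i, Integrable (ind i) μ := fun i =>
    .of_bound (Measurable.ite (hK (measurableSet_singleton i)) measurable_const
      measurable_const).aestronglyMeasurable 1 (ae_of_all _ fun ω => by
        simp only [ind]; split <;> norm_num)
  have hfun : (fun ω => f ω (K ω)) = ∑ i, (fun ω => f ω i) * ind i := by
    ext ω; simp only [Finset.sum_apply, Pi.mul_apply, ind]; exact apply_eq_sum_mul_ite _ _
  rw [hfun]
  filter_upwards [condExp_finsetSum (s := univ) (f := fun i => (fun ω => f ω i) * ind i)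
      (fun i _ => (hind i).bdd_mul
      ((hf i).mono hm).aestronglyMeasurable (ae_of_all _ fun ω => hC ω i)) m,
    ae_all_iff.2 fun i => condExp_stronglyMeasurable_mul_of_bound hm (hf i) (hind i) C
      (ae_of_all _ fun ω => hC ω i),
    ae_all_iff.2 hq] with ω h1 h2 h3
  rw [h1, Finset.sum_apply]
  exact sum_congr rfl fun i _ => by rw [h2, Pi.mul_apply, mul_comm, ← h3 i]

end CondExp

section Exponential

variable {Ω : Type*} {m0 : MeasurableSpace Ω} {μ : Measure Ω} [IsProbabilityMeasure μ]
  {ℱ : Filtration ℕ m0} {x p : ℕ → Ω → ℝ}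

lemma measurable_exp_sum (hxm : ∀ s, Measurable[ℱ (s + 1)] (x s))
    (hpm : ∀ s, Measurable[ℱ s] (p s)) (T : ℕ) :
    Measurable[ℱ T] fun ω => exp (∑ s ∈ range T, (p s ω / 2 - x s ω)) :=
  measurable_exp.comp <| Finset.measurable_sum _ fun s hs =>
    (((hpm s).mono (ℱ.mono (mem_range.1 hs).le) le_rfl).div_const 2).sub
      ((hxm s).mono (ℱ.mono (mem_range.1 hs)) le_rfl)

lemma exp_sum_le (hx0 : ∀ s ω, 0 ≤ x s ω) (hp1 : ∀ s ω, p s ω ≤ 1) (T : ℕ) (ω : Ω) :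
    exp (∑ s ∈ range T, (p s ω / 2 - x s ω)) ≤ exp (T / 2) := by
  gcongr
  calc ∑ s ∈ range T, (p s ω / 2 - x s ω) ≤ ∑ s ∈ range T, (1 / 2 : ℝ) :=
        sum_le_sum fun s _ => by linarith [hx0 s ω, hp1 s ω]
    _ = T / 2 := by simp [div_eq_mul_inv]

lemma integrable_exp_sum (hx0 : ∀ s ω, 0 ≤ x s ω) (hp1 : ∀ s ω, p s ω ≤ 1)
    (hxm : ∀ s, Measurable[ℱ (s + 1)] (x s)) (hpm : ∀ s, Measurable[ℱ s] (p s)) (T : ℕ) :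
    Integrable (fun ω => exp (∑ s ∈ range T, (p s ω / 2 - x s ω))) μ :=
  .of_bound ((measurable_exp_sum hxm hpm T).mono (ℱ.le T) le_rfl).aestronglyMeasurable _ <|
    ae_of_all _ fun ω => by
      rw [norm_of_nonneg (exp_pos _).le]; exact exp_sum_le hx0 hp1 T ω

/-- A supermartingale bound: `exp (-x) ≤ 1 - x / 2` on `[0, 1]` and
`exp (p / 2) * (1 - p / 2) ≤ 1`. -/
theorem integral_exp_sum_le_one (hx0 : ∀ s ω, 0 ≤ x s ω) (hx1 : ∀ s ω, x s ω ≤ 1)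
    (hp1 : ∀ s ω, p s ω ≤ 1) (hxm : ∀ s, Measurable[ℱ (s + 1)] (x s))
    (hpm : ∀ s, Measurable[ℱ s] (p s)) (hxp : ∀ s, μ[x s | ℱ s] =ᵐ[μ] p s) (T : ℕ) :
    ∫ ω, exp (∑ s ∈ range T, (p s ω / 2 - x s ω)) ∂μ ≤ 1 := by
  induction T with
  | zero => simp
  | succ T ih =>
    set E := fun ω => exp (∑ s ∈ range T, (p s ω / 2 - x s ω))
    set H := fun ω => E ω * exp (p T ω / 2)
    have hHm : Measurable[ℱ T] H :=
      (measurable_exp_sum hxm hpm T).mul (measurable_exp.comp ((hpm T).div_const 2))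
    have hHC : ∀ ω, ‖H ω‖ ≤ exp (T / 2) * exp (1 / 2) := fun ω => by
      rw [norm_of_nonneg (by positivity)]
      exact mul_le_mul (exp_sum_le hx0 hp1 T ω) (exp_le_exp.2 (by linarith [hp1 T ω]))
        (exp_pos _).le (exp_pos _).le
    have hxT : Integrable (x T) μ := .of_bound
      ((hxm T).mono (ℱ.le _) le_rfl).aestronglyMeasurable 1 <| ae_of_all _ fun ω => by
        rw [norm_of_nonneg (hx0 T ω)]; exact hx1 T ω
    calc ∫ ω, exp (∑ s ∈ range (T + 1), (p s ω / 2 - x s ω)) ∂μ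
        = ∫ ω, H ω * exp (-x T ω) ∂μ := by
          simp only [H, E, sum_range_succ, exp_add, exp_sub, div_eq_mul_inv, exp_neg, mul_assoc]
      _ ≤ ∫ ω, H ω * (1 - x T ω / 2) ∂μ := by
          refine integral_mono_of_nonneg (ae_of_all _ fun ω => by positivity)
            (((integrable_const 1).sub (hxT.div_const 2)).bdd_mul
              (hHm.mono (ℱ.le T) le_rfl).aestronglyMeasurable (ae_of_all _ hHC))
            (ae_of_all _ fun ω => ?_)
          exact mul_le_mul_of_nonneg_left (exp_neg_le_one_sub_half (hx0 T ω) (hx1 T ω))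
            (by positivity)
      _ = ∫ ω, H ω * (1 - p T ω / 2) ∂μ :=
          integral_mul_eq_of_condExp_ae_eq (ℱ.le T) hHm.stronglyMeasurable hHC
            ((integrable_const 1).sub (hxT.div_const 2))
            (condExp_one_sub_div_two_ae_eq (ℱ.le T) hxT (hxp T))
      _ ≤ ∫ ω, E ω ∂μ := by
          refine integral_mono_of_nonneg (ae_of_all _ fun ω => ?_)
            (integrable_exp_sum hx0 hp1 hxm hpm T) (ae_of_all _ fun ω => ?_)
          · exact mul_nonneg (by positivity) (by linarith [hp1 T ω])
          · calc H ω * (1 - p T ω / 2) = E ω * (exp (p T ω / 2) * (1 - p T ω / 2)) := by ring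
              _ ≤ E ω := mul_le_of_le_one_right (exp_pos _).le (exp_mul_one_sub_le_one _)
      _ ≤ 1 := ih

theorem measureReal_sum_lt_le (hx0 : ∀ s ω, 0 ≤ x s ω) (hx1 : ∀ s ω, x s ω ≤ 1)
    (hp1 : ∀ s ω, p s ω ≤ 1) (hxm : ∀ s, Measurable[ℱ (s + 1)] (x s))
    (hpm : ∀ s, Measurable[ℱ s] (p s)) (hxp : ∀ s, μ[x s | ℱ s] =ᵐ[μ] p s) (T : ℕ) (a : ℝ) :
    μ.real {ω | ∑ s ∈ range T, x s ω < (∑ s ∈ range T, p s ω) / 2 - a} ≤ exp (-a) := by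
  set W := fun ω => exp (∑ s ∈ range T, (p s ω / 2 - x s ω))
  have hmarkov : exp a * μ.real {ω | exp a ≤ W ω} ≤ 1 :=
    (mul_meas_ge_le_integral_of_nonneg (ae_of_all _ fun ω => (exp_pos _).le)
      (integrable_exp_sum hx0 hp1 hxm hpm T) (exp a)).trans
      (integral_exp_sum_le_one hx0 hx1 hp1 hxm hpm hxp T)
  have hsub : {ω | ∑ s ∈ range T, x s ω < (∑ s ∈ range T, p s ω) / 2 - a}
      ⊆ {ω | exp a ≤ W ω} := fun ω hω => by
    simp only [Set.mem_ofPred_eq, W, sum_sub_distrib, ← sum_div] at hω ⊢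
    exact exp_le_exp.2 (by linarith)
  calc μ.real _ ≤ μ.real {ω | exp a ≤ W ω} := measureReal_mono hsub
    _ = exp (-a) * (exp a * μ.real {ω | exp a ≤ W ω}) := by
        rw [← mul_assoc, ← exp_add, neg_add_cancel, exp_zero, one_mul]
    _ ≤ exp (-a) := mul_le_of_le_one_right (exp_pos _).le hmarkov

end Exponential

section Allocation

variable {Ω : Type*} {m0 : MeasurableSpace Ω} {μ : Measure Ω} [IsProbabilityMeasure μ]
  {ℱ : Filtration ℕ m0} {n : ℕ} {Q : ℕ → Ω → Fin n → ℝ} {J : ℕ → Ω → Fin n}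

lemma measurable_binLoad (hJ : ∀ t, Measurable[ℱ (t + 1)] (J t)) (t : ℕ) (i : Fin n) :
    Measurable[ℱ t] fun ω => binLoad J t i ω := by
  induction t with
  | zero => simp [binLoad]
  | succ t ih =>
    simp_rw [binLoad_succ]
    exact (ih.mono (ℱ.mono t.le_succ) le_rfl).add
      (Measurable.ite (hJ t (measurableSet_singleton i)) measurable_const measurable_const)

lemma measurable_loadEq (hJ : ∀ t, Measurable[ℱ (t + 1)] (J t)) (c t : ℕ) (i : Fin n) :
    Measurable[ℱ t] fun ω => loadEq J c t i ω :=
  Measurable.ite (measurable_binLoad hJ t i (measurableSet_singleton c)) measurable_const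
    measurable_const

theorem measureReal_heavyMass_lt_le (hQ0 : ∀ t ω i, 0 ≤ Q t ω i)
    (hQ1 : ∀ t ω, ∑ i, Q t ω i ≤ 1) (hQm : ∀ t i, Measurable[ℱ t] fun ω => Q t ω i)
    (hJ : ∀ t, Measurable[ℱ (t + 1)] (J t))
    (hQJ : ∀ t i, μ[fun ω => if J t ω = i then (1 : ℝ) else 0 | ℱ t] =ᵐ[μ] fun ω => Q t ω i)
    {ν : Fin n → ℝ} {b : ℝ} (hb : 0 < b) (hν0 : ∀ i, 0 ≤ ν i) (hνb : ∀ i, ν i ≤ b)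
    (a : ℝ) (c T : ℕ) :
    μ.real {ω | heavyMass J ν (c + 1) T ω < compensator J Q ν c T ω / 2 - a * b}
      ≤ exp (-a) := by
  -- `heavyMass / b` adds up the `[0, 1]`-valued increments `f s ω (J s ω)`, whose conditional
  -- means `∑ i, Q s ω i * f s ω i` add up to `compensator / b`.
  set f : ℕ → Ω → Fin n → ℝ := fun s ω i => ν i * loadEq J c s i ω / b
  have hf0 : ∀ s ω i, 0 ≤ f s ω i := fun s ω i =>
    div_nonneg (mul_nonneg (hν0 i) loadEq_nonneg) hb.le
  have hf1 : ∀ s ω i, f s ω i ≤ 1 := fun s ω i =>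
    (div_le_one hb).2 ((mul_le_of_le_one_right (hν0 i) loadEq_le_one).trans (hνb i))
  have hfm : ∀ s i, Measurable[ℱ s] fun ω => f s ω i := fun s i =>
    ((measurable_loadEq hJ c s i).const_mul (ν i)).div_const b
  have hheavy : ∀ ω, heavyMass J ν (c + 1) T ω = b * ∑ s ∈ range T, f s ω (J s ω) := fun ω => by
    simp only [heavyMass_succ_eq_sum, f, mul_sum, mul_div_cancel₀ _ hb.ne']
  have hcomp : ∀ ω, compensator J Q ν c T ω = b * ∑ s ∈ range T, ∑ i, Q s ω i * f s ω i :=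
    fun ω => by
      simp only [compensator, levelMass, f, Pi.mul_apply, mul_sum]
      refine sum_congr rfl fun s _ => sum_congr rfl fun i _ => ?_
      field_simp
  refine (measureReal_mono fun ω hω => ?_).trans (measureReal_sum_lt_le (ℱ := ℱ)
    (x := fun s ω => f s ω (J s ω)) (p := fun s ω => ∑ i, Q s ω i * f s ω i)
    (fun s ω => hf0 s ω _) (fun s ω => hf1 s ω _)
    (fun s ω => ((sum_le_sum fun i _ => mul_le_of_le_one_right (hQ0 s ω i) (hf1 s ω i)).trans
      (hQ1 s ω)))
    (fun s => measurable_apply (fun i => (hfm s i).mono (ℱ.mono s.le_succ) le_rfl) (hJ s))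
    (fun s => Finset.measurable_sum _ fun i _ => (hQm s i).mul (hfm s i))
    (fun s => condExp_apply_ae_eq (ℱ.le s) ((hJ s).mono (ℱ.le _) le_rfl) (hQJ s)
      (fun i => (hfm s i).stronglyMeasurable) (C := 1) fun ω i => by
        rw [norm_of_nonneg (hf0 s ω i)]; exact hf1 s ω i) T a)
  simp only [Set.mem_ofPred_eq, hheavy, hcomp] at hω ⊢
  refine lt_of_mul_lt_mul_left ?_ hb.le
  linarith

theorem measureReal_forall_binLoad_lt_le {pool : Finset (Fin n → ℝ)} {a b : ℝ} {ℓ : ℕ}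
    (hpos : ∀ ν ∈ pool, ∀ i, 0 ≤ ν i) (hsum : ∀ ν ∈ pool, ∑ i, ν i = 1)
    (hbd : ∀ ν ∈ pool, ∀ i, ν i ≤ b) (hpool : ∀ t ω, Q t ω ∈ pool)
    (hQm : ∀ t i, Measurable[ℱ t] fun ω => Q t ω i) (hJ : ∀ t, Measurable[ℱ (t + 1)] (J t))
    (hQJ : ∀ t i, μ[fun ω => if J t ω = i then (1 : ℝ) else 0 | ℱ t] =ᵐ[μ] fun ω => Q t ω i)
    (hℓ : 1 ≤ ℓ) (ha : 6 ≤ a) (hab : (30 * (20 * (ℓ : ℝ)) ^ (2 ^ ℓ - 1)) ^ 2 * (a * b) ≤ 6) :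
    μ.real {ω | ∀ i, binLoad J n i ω < ℓ} ≤ pool.card * ℓ * n * exp (-a) := by
  set E : (Fin n → ℝ) × ℕ × ℕ → Set Ω := fun x =>
    {ω | heavyMass J x.1 (x.2.1 + 1) x.2.2 ω < compensator J Q x.1 x.2.1 x.2.2 ω / 2 - a * b}
  have hsub : {ω | ∀ i, binLoad J n i ω < ℓ} ⊆ ⋃ x ∈ pool ×ˢ range ℓ ×ˢ range n, E x :=
    fun ω hω => by
      obtain ⟨s, hs, c, hc, hlt⟩ := exists_heavyMass_lt_of_binLoad_lt
        (fun s i => hpos _ (hpool s ω) i) (fun s => hsum _ (hpool s ω))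
        (fun s i => hbd _ (hpool s ω) i) hℓ ha hab hω
      exact Set.mem_biUnion (x := (Q s ω, c, s)) (by simp [hpool, hc, hs]) hlt
  have hE : ∀ x ∈ pool ×ˢ range ℓ ×ˢ range n, μ.real (E x) ≤ exp (-a) := by
    rintro ⟨ν, c, T⟩ hx
    have hν := (mem_product.1 hx).1
    have hb : 0 < b := pos_of_mul_pos_right (one_pos.trans_le <| (hsum ν hν).symm.le.trans <|
      (sum_le_sum fun i _ => hbd ν hν i).trans_eq (by simp)) (Nat.cast_nonneg n)
    exact measureReal_heavyMass_lt_le (fun t ω => hpos _ (hpool t ω))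
      (fun t ω => (hsum _ (hpool t ω)).le) hQm hJ hQJ hb (hpos ν hν) (hbd ν hν) a c T
  calc _ ≤ ∑ x ∈ pool ×ˢ range ℓ ×ˢ range n, μ.real (E x) :=
        (measureReal_mono hsub (measure_ne_top μ _)).trans (measureReal_biUnion_finset_le _ _)
    _ ≤ ∑ x ∈ pool ×ˢ range ℓ ×ˢ range n, exp (-a) := sum_le_sum hE
    _ = pool.card * ℓ * n * exp (-a) := by simp [card_product, mul_assoc]

end Allocation

lemma sq_mul_le_of_le_sqrt {x c : ℝ} {n k m : ℕ} (hx : 0 ≤ x) (hc : 0 ≤ c)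
    (h : x ≤ √(n / (k * m))) : x ^ 2 * (c * m * (k / n)) ≤ c := by
  have h2 := pow_le_pow_left₀ hx h 2
  rw [sq_sqrt (by positivity)] at h2
  calc x ^ 2 * (c * m * (k / n)) ≤ n / (k * m) * (c * m * (k / n)) := by gcongr
    _ = c * ((k * m) / (k * m)) * (n / n) := by ring
    _ ≤ c := (mul_le_of_le_one_right (by positivity) (div_self_le_one _)).trans
        (mul_le_of_le_one_right hc (div_self_le_one _))

lemma two_pow_mul_pow_mul_exp_le_one {x : ℝ} {m : ℕ} (hx : 0 < x) (hm : log x ≤ m) :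
    2 ^ m * x ^ 5 * exp (-(6 * m)) ≤ 1 := by
  have h2 : (2 : ℝ) ^ m ≤ exp m := by
    calc (2 : ℝ) ^ m ≤ exp 1 ^ m :=
          pow_le_pow_left₀ (by norm_num) (by linarith [add_one_le_exp 1]) m
      _ = exp m := by rw [← exp_nat_mul, mul_one]
  have h5 : x ^ 5 ≤ exp (5 * m) := by
    calc x ^ 5 = exp (log x) ^ 5 := by rw [exp_log hx]
      _ = exp (5 * log x) := by rw [← exp_nat_mul]; norm_num
      _ ≤ exp (5 * m) := exp_le_exp.2 (by linarith)
  calc 2 ^ m * x ^ 5 * exp (-(6 * m)) ≤ exp m * exp (5 * m) * exp (-(6 * m)) := by gcongr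
    _ = 1 := by rw [← exp_add, ← exp_add, ← exp_zero]; ring_nf

lemma card_mul_exp_neg_le {x : ℝ} {c m ℓ : ℕ} (hx : 0 < x) (hm : log x ≤ m) (hc : c ≤ 2 ^ m) :
    (c : ℝ) * ℓ * x * exp (-(6 * m)) ≤ ℓ / x ^ 4 :=
  calc (c : ℝ) * ℓ * x * exp (-(6 * m)) ≤ 2 ^ m * ℓ * x * exp (-(6 * m)) := by
        gcongr; exact_mod_cast hc
    _ = 2 ^ m * x ^ 5 * exp (-(6 * m)) * (ℓ / x ^ 4) := by field_simp
    _ ≤ ℓ / x ^ 4 := mul_le_of_le_one_left (by positivity) (two_pow_mul_pow_mul_exp_le_one hx hm)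

end AdaptiveAllocation

open AdaptiveAllocation in
/-- The unbounded-load part of Theorem 3 of the paper: there is an absolute constant
`A > 0` such that for all sufficiently large `n`, in the relaxed adaptive allocation
model with `n` balls and `n` bins, pool of at most `2^m` strategies (each with point
masses at most `k/n`) and `m ≥ log n`, for every positive integer `ℓ` satisfying
`30 (20ℓ)^(2^ℓ - 1) ≤ min √(n/(km)) √(n/(ℓ log n))`, the maximal load after `n` rounds is
at least `ℓ` with probability at least `1 - A ℓ n⁻⁴`. -/
theorem unbounded_load_lower_bound :
    ∃ A : ℝ, 0 < A ∧ ∃ n₀ : ℕ, ∀ n : ℕ, n₀ ≤ n → ∀ k m : ℕ, Real.log n ≤ m →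
    ∀ (Ω : Type) (_ : MeasurableSpace Ω) (μ : Measure Ω), IsProbabilityMeasure μ →
    ∀ (ℱ : Filtration ℕ ‹MeasurableSpace Ω›)
      (pool : Finset (Fin n → ℝ)), pool.card ≤ 2 ^ m →
      (∀ ν ∈ pool, ∀ i, 0 ≤ ν i) →
      (∀ ν ∈ pool, ∑ i, ν i = 1) →
      (∀ ν ∈ pool, ∀ i, ν i ≤ (k : ℝ) / n) →
    ∀ (Q : ℕ → Ω → Fin n → ℝ) (J : ℕ → Ω → Fin n),
      (∀ t ω, Q t ω ∈ pool) →
      (∀ t i, Measurable[ℱ t] fun ω => Q t ω i) →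
      (∀ t, Measurable[ℱ (t + 1)] (J t)) →
      (∀ t i, (μ[(fun ω => if J t ω = i then (1 : ℝ) else 0) | ℱ t])
          =ᵐ[μ] fun ω => Q t ω i) →
    ∀ ℓ : ℕ, 1 ≤ ℓ →
      30 * (20 * (ℓ : ℝ)) ^ (2 ^ ℓ - 1)
        ≤ min (Real.sqrt ((n : ℝ) / ((k : ℝ) * m)))
            (Real.sqrt ((n : ℝ) / (ℓ * Real.log n))) →
      1 - A * ℓ / (n : ℝ) ^ 4 ≤ (μ {ω | ∃ i, ℓ ≤ binLoad J n i ω}).toReal := by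
  refine ⟨1, one_pos, 2, fun n hn k m hlog Ω _ μ _ ℱ pool hcard hpos hsum hbd Q J hpool hQm hJ
    hQJ ℓ hℓ hmin => ?_⟩
  have hnR : (0 : ℝ) < n := by exact_mod_cast (by omega : 0 < n)
  have hm : (1 : ℝ) ≤ m := by
    have := log_pos (by exact_mod_cast (by omega : 1 < n) : (1 : ℝ) < n)
    exact_mod_cast Nat.one_le_iff_ne_zero.2 fun h => by simp [h] at hlog; linarith
  have hfail := measureReal_forall_binLoad_lt_le (a := 6 * m) hpos hsum hbd hpool hQm hJ hQJ hℓ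
    (by linarith) (sq_mul_le_of_le_sqrt (by positivity) (by norm_num)
      (hmin.trans (min_le_left _ _)))
  have hcompl : {ω | ∃ i, ℓ ≤ binLoad J n i ω}ᶜ = {ω | ∀ i, binLoad J n i ω < ℓ} := by
    ext; simp
  have hunion := measureReal_union_le (μ := μ) {ω | ∃ i, ℓ ≤ binLoad J n i ω}
    {ω | ∃ i, ℓ ≤ binLoad J n i ω}ᶜ
  rw [Set.union_compl_self, probReal_univ, hcompl] at hunion
  rw [← measureReal_def, one_mul]
  linarith [card_mul_exp_neg_le (ℓ := ℓ) hnR hlog hcard]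
end

section
/- Let Q_1, …, Q_t be probability distributions on n bins with Q_s(i) ≤ k/n for every s and every bin i, and let q ≥ 1 be an integer. Define V_t^{1;q} = Σ_{s_1 < ⋯ < s_q ≤ t} Σ_{i=1}^n Q_{s_1}(i)·Q_{s_2}(i)···Q_{s_q}(i). Then for any fixed α > 0 with t > (1+α)·k·q, one has V_t^{1;q} ≥ (t − (1+α)·k·q)^q / (e^{q/(2α)} · n^{q−1} · q!). -/
/-!
In a single bin write `x_s = Q_s(i) ≤ M := k/n`. Double counting gives
`(q+1) e_{q+1}(T) = ∑_{r ∈ T} x_r e_q(T ∖ {r})`, and deleting one `x_r` lowers the mass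
`∑_T x` by at most `M`; so by induction on `q`, `e_q(T) ≥ (∑_T x - (q-1) M)₊^q / q!`.
Over all bins these positive parts carry total mass at least `t - (q-1) k ≥ t - (1+α) k q`,
and the power-mean inequality turns that into the bound, losing only `n^{q-1}` for spreading
the mass over `n` bins.
-/

open Finset
open scoped Nat

theorem sum_mul_sum_powersetCard_erase {α R : Type*} [DecidableEq α] [CommSemiring R]
    (x : α → R) (T : Finset α) (q : ℕ) :
    ∑ r ∈ T, x r * ∑ S ∈ (T.erase r).powersetCard q, ∏ s ∈ S, x s
      = (q + 1 : R) * ∑ S ∈ T.powersetCard (q + 1), ∏ s ∈ S, x s := by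
  have notMem {r : α} {S : Finset α} (hS : S ⊆ T.erase r) : r ∉ S :=
    fun h => (mem_erase.1 (hS h)).1 rfl
  calc _ = ∑ p ∈ T.sigma fun r => (T.erase r).powersetCard q, ∏ s ∈ insert p.1 p.2, x s := by
        rw [sum_sigma]
        refine sum_congr rfl fun r _ => ?_
        rw [mul_sum]
        exact sum_congr rfl fun S hS => (prod_insert (notMem (mem_powersetCard.1 hS).1)).symm
    _ = ∑ p ∈ (T.powersetCard (q + 1)).sigma id, ∏ s ∈ p.1, x s := by
        refine sum_nbij' (fun p => ⟨insert p.1 p.2, p.1⟩) (fun p => ⟨p.2, p.1.erase p.2⟩)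
          ?_ ?_ ?_ ?_ fun _ _ => rfl
        · rintro ⟨r, S⟩ hp
          simp only [mem_sigma, mem_powersetCard, id, mem_insert_self, and_true] at hp ⊢
          exact ⟨insert_subset hp.1 (hp.2.1.trans (erase_subset _ _)),
            by rw [card_insert_of_notMem (notMem hp.2.1), hp.2.2]⟩
        · rintro ⟨U, r⟩ hp
          simp only [mem_sigma, mem_powersetCard, id] at hp ⊢
          exact ⟨hp.1.1 hp.2, erase_subset_erase _ hp.1.1,
            by rw [card_erase_of_mem hp.2, hp.1.2, Nat.add_sub_cancel]⟩
        · rintro ⟨r, S⟩ hp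
          simp only [mem_sigma, mem_powersetCard] at hp
          simp [erase_insert (notMem hp.2.1)]
        · rintro ⟨U, r⟩ hp
          simp only [mem_sigma, id] at hp
          simp [insert_erase hp.2]
    _ = _ := by
        rw [sum_sigma, mul_sum]
        refine sum_congr rfl fun U hU => ?_
        simp only [id, sum_const, (mem_powersetCard.1 hU).2, nsmul_eq_mul, Nat.cast_succ]

theorem pow_div_factorial_le_sum_powersetCard_prod {α K : Type*} [DecidableEq α] [Field K]
    [LinearOrder K] [IsStrictOrderedRing K] {M : K} (hM : 0 ≤ M) {x : α → K} (q : ℕ)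
    (T : Finset α) (hx : ∀ r ∈ T, 0 ≤ x r) (hxM : ∀ r ∈ T, x r ≤ M) :
    max (∑ r ∈ T, x r - (q - 1) * M) 0 ^ q / q ! ≤ ∑ S ∈ T.powersetCard q, ∏ r ∈ S, x r := by
  induction q generalizing T with
  | zero => simp
  | succ q ih =>
    set m := max (∑ r ∈ T, x r - q * M) 0
    have hm : m ≤ ∑ r ∈ T, x r :=
      max_le (by linarith [mul_nonneg q.cast_nonneg hM]) (sum_nonneg hx)
    have herase (r) (hr : r ∈ T) :
        m ^ q / q ! ≤ ∑ S ∈ (T.erase r).powersetCard q, ∏ s ∈ S, x s := by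
      refine le_trans ?_ (ih (T.erase r) (fun s hs => hx s (mem_of_mem_erase hs))
        fun s hs => hxM s (mem_of_mem_erase hs))
      have : m ≤ max (∑ s ∈ T.erase r, x s - (q - 1) * M) 0 := by
        rw [sum_erase_eq_sub hr]
        exact max_le_max_right _ (by linarith [hxM r hr])
      gcongr
    have hdouble : m * (m ^ q / q !) ≤ (q + 1) * ∑ S ∈ T.powersetCard (q + 1), ∏ r ∈ S, x r := by
      rw [← sum_mul_sum_powersetCard_erase]
      calc m * (m ^ q / q !) ≤ (∑ r ∈ T, x r) * (m ^ q / q !) := by gcongr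
        _ ≤ _ := by
          rw [sum_mul]
          exact sum_le_sum fun r hr => mul_le_mul_of_nonneg_left (herase r hr) (hx r hr)
    calc _ = m * (m ^ q / q !) / (q + 1) := by
          push_cast [Nat.factorial_succ]
          rw [add_sub_cancel_right]
          field_simp
          ring
      _ ≤ _ := by rwa [div_le_iff₀' (by positivity)]

theorem sum_max_pow_div_le_sum_powersetCard_sum_prod {α ι K : Type*} [DecidableEq α]
    [Fintype ι] [Field K] [LinearOrder K] [IsStrictOrderedRing K] {M : K} (hM : 0 ≤ M)
    {x : α → ι → K} {q : ℕ} (hq : 1 ≤ q) (T : Finset α) (hx : ∀ r ∈ T, ∀ i, 0 ≤ x r i)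
    (hxM : ∀ r ∈ T, ∀ i, x r i ≤ M) :
    (∑ i, max (∑ r ∈ T, x r i - (q - 1) * M) 0) ^ q / (Fintype.card ι ^ (q - 1) * q !)
      ≤ ∑ S ∈ T.powersetCard q, ∑ i, ∏ r ∈ S, x r i := by
  obtain ⟨q, rfl⟩ := Nat.exists_eq_add_of_le' hq
  rw [sum_comm, ← div_div, add_tsub_cancel_right, ← card_univ]
  calc _ ≤ (∑ i, max (∑ r ∈ T, x r i - ((q + 1 : ℕ) - 1) * M) 0 ^ (q + 1)) / (q + 1)! := by
        gcongr
        exact pow_sum_div_card_le_sum_pow (fun i _ => le_max_right _ _) q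
    _ ≤ _ := by
        rw [sum_div]
        exact sum_le_sum fun i _ => pow_div_factorial_le_sum_powersetCard_prod hM _ T
          (fun r hr => hx r hr i) fun r hr => hxM r hr i

/-- Lemma 5.2 of the paper: if `Q 0, …, Q (t-1)` are probability vectors on `n` bins with
all entries at most `k/n`, then the expected number of `q`-collisions
`V_t^{1;q} = ∑_{s₁<⋯<s_q≤t} ∑_i Q_{s₁}(i)⋯Q_{s_q}(i)` satisfies, for any `α > 0` with
`t > (1+α) k q`, the lower bound `(t - (1+α)kq)^q / (e^{q/(2α)} n^{q-1} q!)`. -/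
theorem lemma_Vt_packing
    (n k t q : ℕ) (hn : 0 < n) (hq : 1 ≤ q)
    (Q : ℕ → Fin n → ℝ)
    (hQ_nonneg : ∀ s i, 0 ≤ Q s i)
    (hQ_sum : ∀ s, ∑ i, Q s i = 1)
    (hQ_bd : ∀ s i, Q s i ≤ (k : ℝ) / n)
    (α : ℝ) (hα : 0 < α)
    (ht : (1 + α) * k * q < t) :
    ((t : ℝ) - (1 + α) * k * q) ^ q
        / (Real.exp (q / (2 * α)) * (n : ℝ) ^ (q - 1) * (Nat.factorial q : ℝ))
      ≤ ∑ s ∈ Finset.powersetCard q (Finset.range t), ∑ i, ∏ r ∈ s, Q r i := by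
  have hn' : (0 : ℝ) < n := Nat.cast_pos.2 hn
  have hbins := sum_max_pow_div_le_sum_powersetCard_sum_prod (div_nonneg k.cast_nonneg hn'.le)
    hq (range t) (fun r _ => hQ_nonneg r) fun r _ => hQ_bd r
  rw [Fintype.card_fin] at hbins
  have hmass : (t : ℝ) - (1 + α) * k * q
      ≤ ∑ i, max (∑ r ∈ range t, Q r i - (q - 1) * (k / n)) 0 :=
    calc _ ≤ t - (q - 1) * (k : ℝ) := by
          nlinarith [mul_nonneg hα.le (mul_nonneg k.cast_nonneg q.cast_nonneg)]
      _ = ∑ i, (∑ r ∈ range t, Q r i - (q - 1) * (k / n)) := by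
        rw [sum_sub_distrib, sum_comm]
        simp only [hQ_sum, sum_const, card_range, nsmul_eq_mul, mul_one, card_univ,
          Fintype.card_fin, sub_right_inj]
        field_simp
      _ ≤ _ := sum_le_sum fun i _ => le_max_left _ _
  have hB : 0 ≤ (t : ℝ) - (1 + α) * k * q := by linarith
  calc _ ≤ ((t : ℝ) - (1 + α) * k * q) ^ q / (n ^ (q - 1) * q !) := by
        rw [mul_assoc (Real.exp _)]
        exact div_le_div_of_nonneg_left (by positivity) (by positivity)
          (le_mul_of_one_le_left (by positivity) (Real.one_le_exp (by positivity)))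
    _ ≤ _ := by gcongr
    _ ≤ _ := hbins
end

section
/- Let J_1, …, J_n be independent random variables, where J_t takes values in the set of bins {1,…,n} with an arbitrary distribution Q_t, and let N(i) = #{t ≤ n : J_t = i} denote the load of bin i. For a nonnegative integer a, let A_i be the event {N(i) ≤ a}. Then for every subset S of bins, P( ∩_{i∈S} A_i ) ≤ ∏_{i∈S} P(A_i); that is, the events that individual bins have small load are negatively correlated. -/
/-!
Induct on the number of balls. If the first ball lands in bin `j` (probability `q j`), the event
`∀ i ∈ S, N(i) ≤ a i` becomes the same event for the remaining balls, with the threshold of bin `j`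
lowered by one. By induction its probability is at most `∏ i ∈ S, (x i - [i = j] d i)`, where
`x i` and `x i - d i` are the probabilities, for the remaining balls, that bin `i` has load at most
`a i` and at most `a i - 1`. The marginal of bin `i` for all balls is `x i - q i * d i`, so after
averaging over `j` it remains to show
`∑ j, q j * ∏ i ∈ S, (x i - [i = j] d i) ≤ ∏ i ∈ S, (x i - q i * d i)` whenever
`0 ≤ q i * d i ≤ x i` and `∑ j, q j ≤ 1`, which follows by induction on `S`.
-/

open MeasureTheory ProbabilityTheory Finset

lemma sum_mul_prod_sub_ite_le {β : Type*} [Fintype β] [DecidableEq β] {q x d : β → ℝ}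
    (hq : ∀ j, 0 ≤ q j) (hq1 : ∑ j, q j ≤ 1) (hd : ∀ i, 0 ≤ d i) (hdx : ∀ i, q i * d i ≤ x i)
    (S : Finset β) :
    ∑ j, q j * ∏ i ∈ S, (x i - if i = j then d i else 0) ≤ ∏ i ∈ S, (x i - q i * d i) := by
  induction S using Finset.induction_on with
  | empty => simpa using hq1
  | @insert k S hk ih =>
    set F : β → ℝ := fun j => ∏ i ∈ S, (x i - if i = j then d i else 0)
    have hFk : F k = ∏ i ∈ S, x i :=
      prod_congr rfl fun i hi => by rw [if_neg (ne_of_mem_of_not_mem hi hk), sub_zero]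
    have hexpand : ∑ j, q j * ∏ i ∈ insert k S, (x i - if i = j then d i else 0)
        = x k * ∑ j, q j * F j - q k * d k * ∏ i ∈ S, x i :=
      calc _ = ∑ j, (x k * (q j * F j) - if k = j then q k * d k * F k else 0) := by
            refine sum_congr rfl fun j _ => ?_
            rw [prod_insert hk]
            split_ifs with hkj
            · subst hkj; ring
            · ring
        _ = _ := by rw [sum_sub_distrib, ← mul_sum, sum_ite_eq, if_pos (mem_univ k), hFk]
    have hck : 0 ≤ q k * d k := mul_nonneg (hq k) (hd k)
    have hxk : 0 ≤ x k := hck.trans (hdx k)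
    have hRP : ∏ i ∈ S, (x i - q i * d i) ≤ ∏ i ∈ S, x i :=
      prod_le_prod (fun i _ => sub_nonneg.2 (hdx i))
        fun i _ => sub_le_self _ (mul_nonneg (hq i) (hd i))
    rw [hexpand, prod_insert hk]
    nlinarith [mul_le_mul_of_nonneg_left ih hxk, mul_le_mul_of_nonneg_left hRP hck]

lemma ProbabilityTheory.iIndepFun.measure_preimage_finset_eq_sum_prod {Ω ι β : Type*}
    [MeasurableSpace Ω] {μ : Measure Ω} [Fintype ι] [MeasurableSpace β]
    [MeasurableSingletonClass β] {J : ι → Ω → β} (hmeas : ∀ t, Measurable (J t))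
    (hindep : iIndepFun J μ) (E : Finset (ι → β)) :
    μ ((fun ω t => J t ω) ⁻¹' E) = ∑ f ∈ E, ∏ t, μ (J t ⁻¹' {f t}) := by
  have hfiber (f : ι → β) : (fun ω t => J t ω) ⁻¹' {f} = ⋂ t ∈ univ, J t ⁻¹' {f t} := by
    ext ω; simp [funext_iff]
  rw [← sum_measure_preimage_singleton _ fun f _ =>
    measurable_pi_lambda _ hmeas (measurableSet_singleton f)]
  exact sum_congr rfl fun f _ => by
    rw [hfiber, hindep.measure_inter_preimage_eq_mul _ fun t _ => measurableSet_singleton (f t)]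

namespace BallsInBins

section Load

variable {β : Type*} [DecidableEq β]

def load {m : ℕ} (f : Fin m → β) (i : β) : ℕ := #{t | f t = i}

lemma load_cons {m : ℕ} (j : β) (f : Fin m → β) :
    load (Fin.cons j f : Fin (m + 1) → β) = load f + Pi.single j 1 := by
  ext i
  simp only [Pi.add_apply, load, card_filter, Fin.sum_univ_succ, Fin.cons_zero, Fin.cons_succ,
    Pi.single_apply, eq_comm (a := j)]
  ring

end Load

section SmallLoadProb

variable {β : Type*} [Fintype β] [DecidableEq β] {m : ℕ}

/-- Ball `t` lands in bin `j` with probability `p t j`. The thresholds are integers so that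
lowering a threshold `0` gives the impossible event rather than truncating at `0`. -/
def smallLoadProb (p : Fin m → β → ℝ) (S : Finset β) (a : β → ℤ) : ℝ :=
  ∑ f : Fin m → β with ∀ i ∈ S, (load f i : ℤ) ≤ a i, ∏ t, p t (f t)

lemma smallLoadProb_zero (p : Fin 0 → β → ℝ) (S : Finset β) (a : β → ℤ) :
    smallLoadProb p S a = ∏ i ∈ S, if 0 ≤ a i then 1 else 0 := by
  simp [smallLoadProb, load, prod_boole, apply_ite]

lemma smallLoadProb_succ (p : Fin (m + 1) → β → ℝ) (S : Finset β) (a : β → ℤ) :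
    smallLoadProb p S a =
      ∑ j, p 0 j * smallLoadProb (Fin.tail p) S (a - Pi.single j 1) := by
  rw [smallLoadProb, sum_filter, ← (Fin.consEquiv fun _ => β).sum_comp, Fintype.sum_prod_type]
  refine sum_congr rfl fun j _ => ?_
  rw [smallLoadProb, sum_filter, mul_sum]
  refine sum_congr rfl fun f _ => ?_
  rw [show (Fin.consEquiv fun _ => β) (j, f) = Fin.cons j f from rfl]
  simp only [load_cons, Fin.prod_univ_succ, Fin.cons_zero, Fin.cons_succ, Fin.tail, Pi.add_apply,
    Pi.sub_apply, Pi.single_apply]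
  rw [mul_ite, mul_zero]
  refine if_congr (forall₂_congr fun i _ => ?_) rfl rfl
  split_ifs <;> push_cast <;> omega

lemma smallLoadProb_congr (p : Fin m → β → ℝ) {S : Finset β} {a b : β → ℤ}
    (h : ∀ i ∈ S, a i = b i) : smallLoadProb p S a = smallLoadProb p S b := by
  unfold smallLoadProb
  congr! 2 with f
  exact forall₂_congr fun i hi => by rw [h i hi]

variable {p : Fin m → β → ℝ}

lemma smallLoadProb_nonneg (hp : ∀ t j, 0 ≤ p t j) (S : Finset β) (a : β → ℤ) :
    0 ≤ smallLoadProb p S a :=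
  sum_nonneg fun f _ => prod_nonneg fun t _ => hp t (f t)

lemma smallLoadProb_mono (hp : ∀ t j, 0 ≤ p t j) (S : Finset β) {a b : β → ℤ} (hab : a ≤ b) :
    smallLoadProb p S a ≤ smallLoadProb p S b :=
  sum_le_sum_of_subset_of_nonneg
    (monotone_filter_right _ fun _ _ hf i hi => (hf i hi).trans (hab i))
    fun f _ _ => prod_nonneg fun t _ => hp t (f t)

theorem smallLoadProb_le_prod_singleton (p : Fin m → β → ℝ) (hp : ∀ t j, 0 ≤ p t j)
    (hp1 : ∀ t, ∑ j, p t j = 1) (S : Finset β) (a : β → ℤ) :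
    smallLoadProb p S a ≤ ∏ i ∈ S, smallLoadProb p {i} a := by
  induction m generalizing a with
  | zero => simp only [smallLoadProb_zero, prod_singleton, le_refl]
  | succ m ih =>
    set p' := Fin.tail p
    have hp' : ∀ t j, 0 ≤ p' t j := fun t => hp t.succ
    set x : β → ℝ := fun i => smallLoadProb p' {i} a
    set d : β → ℝ := fun i => x i - smallLoadProb p' {i} (a - Pi.single i 1)
    have hshift (i j : β) :
        smallLoadProb p' {i} (a - Pi.single j 1) = x i - if i = j then d i else 0 := by
      split_ifs with hij
      · subst hij; ring
      · rw [sub_zero]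
        exact smallLoadProb_congr p' fun i' hi' => by
          rw [mem_singleton.1 hi', Pi.sub_apply, Pi.single_eq_of_ne hij, sub_zero]
    have hmarg (i : β) : smallLoadProb p {i} a = x i - p 0 i * d i :=
      calc smallLoadProb p {i} a
          = ∑ j, p 0 j * smallLoadProb p' {i} (a - Pi.single j 1) := smallLoadProb_succ p {i} a
        _ = ∑ j, p 0 j * (x i - if i = j then d i else 0) := by simp only [hshift]
        _ = x i - p 0 i * d i := by
          simp only [mul_sub, mul_ite, mul_zero, sum_sub_distrib, ← sum_mul, hp1 0, one_mul,
            sum_ite_eq, mem_univ, if_true]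
    have hd (i : β) : 0 ≤ d i :=
      sub_nonneg.2 (smallLoadProb_mono hp' _ (sub_le_self a (Pi.single_nonneg.2 zero_le_one)))
    have hdx (i : β) : p 0 i * d i ≤ x i :=
      calc p 0 i * d i ≤ d i := mul_le_of_le_one_left (hd i)
            ((single_le_sum (fun j _ => hp 0 j) (mem_univ i)).trans (hp1 0).le)
        _ ≤ x i := sub_le_self _ (smallLoadProb_nonneg hp' _ _)
    calc smallLoadProb p S a
        = ∑ j, p 0 j * smallLoadProb p' S (a - Pi.single j 1) := smallLoadProb_succ p S a
      _ ≤ ∑ j, p 0 j * ∏ i ∈ S, smallLoadProb p' {i} (a - Pi.single j 1) :=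
          sum_le_sum fun j _ =>
            mul_le_mul_of_nonneg_left (ih p' hp' (fun t => hp1 t.succ) _) (hp 0 j)
      _ = ∑ j, p 0 j * ∏ i ∈ S, (x i - if i = j then d i else 0) := by simp only [hshift]
      _ ≤ ∏ i ∈ S, (x i - p 0 i * d i) := sum_mul_prod_sub_ite_le (hp 0) (hp1 0).le hd hdx S
      _ = ∏ i ∈ S, smallLoadProb p {i} a := by simp only [hmarg]

end SmallLoadProb

lemma measureReal_load_le_eq_smallLoadProb {Ω β : Type*} [MeasurableSpace Ω] {μ : Measure Ω}
    [IsFiniteMeasure μ] [Fintype β] [DecidableEq β] [MeasurableSpace β]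
    [MeasurableSingletonClass β] {m : ℕ} {J : Fin m → Ω → β} (hmeas : ∀ t, Measurable (J t))
    (hindep : iIndepFun J μ) (S : Finset β) (a : β → ℤ) :
    μ.real {ω | ∀ i ∈ S, (load (fun t => J t ω) i : ℤ) ≤ a i} =
      smallLoadProb (fun t j => μ.real (J t ⁻¹' {j})) S a := by
  have hevent : {ω | ∀ i ∈ S, (load (fun t => J t ω) i : ℤ) ≤ a i} =
      (fun ω t => J t ω) ⁻¹' ↑({f | ∀ i ∈ S, (load f i : ℤ) ≤ a i} : Finset (Fin m → β)) := by
    ext ω; simp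
  rw [hevent, measureReal_def, hindep.measure_preimage_finset_eq_sum_prod hmeas,
    ENNReal.toReal_sum fun f _ => ENNReal.prod_ne_top fun t _ => measure_ne_top μ _,
    smallLoadProb]
  simp only [ENNReal.toReal_prod, measureReal_def]

end BallsInBins

open BallsInBins

/-- Lemma 6.3 of the paper (negative correlation of small-load events): if balls
`J 0, …, J (n-1)` are placed independently into `n` bins (ball `t` with an arbitrary
distribution), and `A i` is the event that bin `i` receives at most `a` balls, then for
every subset `S` of bins, `P(∩_{i∈S} A i) ≤ ∏_{i∈S} P(A i)`. -/
theorem small_load_negatively_correlated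
    {Ω : Type*} [MeasurableSpace Ω] (μ : Measure Ω) [IsProbabilityMeasure μ]
    (n : ℕ) (J : Fin n → Ω → Fin n)
    (hmeas : ∀ t, Measurable (J t))
    (hindep : iIndepFun J μ)
    (a : ℕ) (S : Finset (Fin n)) :
    μ {ω | ∀ i ∈ S, (Finset.univ.filter fun t => J t ω = i).card ≤ a}
      ≤ ∏ i ∈ S, μ {ω | (Finset.univ.filter fun t => J t ω = i).card ≤ a} := by
  have hp1 (t : Fin n) : ∑ j, μ.real (J t ⁻¹' {j}) = 1 := by
    rw [sum_measureReal_preimage_singleton _ fun j _ => hmeas t (measurableSet_singleton j)]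
    simp
  have key := smallLoadProb_le_prod_singleton _ (fun _ _ => measureReal_nonneg) hp1 S
    fun _ => (a : ℤ)
  simp only [← measureReal_load_le_eq_smallLoadProb hmeas hindep, mem_singleton, forall_eq,
    Nat.cast_le, load] at key
  rwa [← ENNReal.toReal_le_toReal (measure_ne_top μ _)
    (ENNReal.prod_ne_top fun i _ => measure_ne_top μ _), ENNReal.toReal_prod]
end
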